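/- arXiv:2009.00181 — 6 statements merged into one kernel-verified Lean document; each statement's English description precedes it below -/
import Mathlib

section
/- Let G be a graph on vertex set {1,...,n} and let 1 ≤ i < j ≤ n. If G contains no linear forest with k edges spanning all n vertices (equivalently, no subgraph isomorphic to a member of the family L_{n,k}), then the shifted graph S_{ij}(G) also contains no such linear forest. -/
/-!
Let `H ≤ S_{ij}(G)` be a linear forest. An edge of `S_{ij}(G)` missing from `G` has the form
`iz` with `jz ∈ G`, and an edge `jz` of `S_{ij}(G)` with `z ≠ i` forces `iz ∈ G`. So if every
`H`-neighbour `z ≠ j` of `i` has `jz ∈ G`, swapping `i` and `j` maps `H` into `G`. Otherwise `i`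
has two `H`-neighbours: `x` with `ix ∉ G`, `jx ∈ G`, and `y` with `iy ∈ G`, `jy ∉ G`. Deleting `ix`
leaves a linear forest `F ≤ G` in which `i` and `x` are endpoints of different paths and every
neighbour `z` of `j` has `iz ∈ G`. One edge can then be added back inside `G`: `jx` alone if `j`
is an endpoint off the path of `x`, and otherwise `jx` and `iu` in exchange for an edge `ju`,
chosen so that neither addition closes a cycle.
-/

open SimpleGraph Finset

/-- `G` contains a linear forest with `k` edges: a subgraph that is acyclic
with maximum degree at most 2 and exactly `k` edges. -/
def containsLinearForest {V : Type*} (G : SimpleGraph V) (k : ℕ) : Prop :=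
  ∃ H : SimpleGraph V, H ≤ G ∧ H.IsAcyclic ∧ (∀ v, (H.neighborSet v).ncard ≤ 2) ∧
    H.edgeSet.ncard = k

/-- `G` contains a matching with `k` edges. -/
def containsMatching {V : Type*} (G : SimpleGraph V) (k : ℕ) : Prop :=
  ∃ H : SimpleGraph V, H ≤ G ∧ (∀ v, (H.neighborSet v).ncard ≤ 1) ∧ H.edgeSet.ncard = k

/-- Number of `s`-cliques (copies of `K_s`) in `G`. -/
noncomputable def cliqueCount {V : Type*} (G : SimpleGraph V) (s : ℕ) : ℕ :=
  {S : Finset V | G.IsNClique s S}.ncard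

/-- Number of copies of `K*_{s,t}` in `G`: pairs `(W₁, W₂)` of disjoint vertex sets with
`|W₁| = s`, `|W₂| = t`, `W₁` a clique and all `W₁`–`W₂` edges present. -/
noncomputable def kstCount {V : Type*} (G : SimpleGraph V) (s t : ℕ) : ℕ :=
  {p : Finset V × Finset V | p.1.card = s ∧ p.2.card = t ∧ Disjoint p.1 p.2 ∧
    G.IsClique (p.1 : Set V) ∧ ∀ a ∈ p.1, ∀ b ∈ p.2, G.Adj a b}.ncard

open scoped Classical in
/-- Kelmans shifting operation on a single edge. -/
noncomputable def shiftEdge {n : ℕ} (G : SimpleGraph (Fin n)) (i j : Fin n)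
    (e : Sym2 (Fin n)) : Sym2 (Fin n) :=
  if j ∈ e ∧ i ∉ e ∧ e.map (fun x => if x = j then i else x) ∉ G.edgeSet then
    e.map (fun x => if x = j then i else x)
  else e

/-- The shifted graph `S_{ij}(G)`. -/
noncomputable def shiftGraph {n : ℕ} (G : SimpleGraph (Fin n)) (i j : Fin n) :
    SimpleGraph (Fin n) :=
  SimpleGraph.fromEdgeSet (shiftEdge G i j '' G.edgeSet)

namespace SimpleGraph

variable {V : Type*} {G F F' : SimpleGraph V} {a b i j u v w x : V}

def IsLinearForest (F : SimpleGraph V) : Prop :=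
  F.IsAcyclic ∧ ∀ v, (F.neighborSet v).ncard ≤ 2

lemma containsLinearForest_of_le (hle : F ≤ G) (hF : F.IsLinearForest) :
    containsLinearForest G F.edgeSet.ncard :=
  ⟨F, hle, hF.1, hF.2, rfl⟩

lemma IsLinearForest.map {W : Type*} (e : V ≃ W) (hF : F.IsLinearForest) :
    (F.map e).IsLinearForest := by
  refine ⟨(Iso.map e F).isAcyclic_iff.mp hF.1, fun w => ?_⟩
  obtain ⟨v, rfl⟩ := e.surjective w
  rw [← Equiv.coe_toEmbedding, neighborSet_map, Set.ncard_map]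
  exact hF.2 v

lemma ncard_edgeSet_map {W : Type*} (f : V ↪ W) : (F.map f).edgeSet.ncard = F.edgeSet.ncard := by
  rw [edgeSet_map, Set.ncard_image_of_injective _ f.sym2Map.injective]

lemma neighborSet_sup_edge_of_ne (hu : w ≠ u) (hv : w ≠ v) :
    (F ⊔ edge u v).neighborSet w = F.neighborSet w := by
  ext x
  simp [edge_adj, hu, hv]

lemma neighborSet_sup_edge_subset :
    (F ⊔ edge u v).neighborSet u ⊆ insert v (F.neighborSet u) := by
  intro x
  simp only [mem_neighborSet, sup_adj, edge_adj, Set.mem_insert_iff]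
  grind

lemma Reachable.of_sup_edge (h : (F ⊔ edge u v).Reachable a b) :
    F.Reachable a b ∨ (F.Reachable a u ∧ F.Reachable v b) ∨
      (F.Reachable a v ∧ F.Reachable u b) := by
  obtain ⟨p⟩ := h
  induction p with
  | nil => exact Or.inl .rfl
  | @cons a c b hac p ih =>
    rcases (sup_adj ..).mp hac with hF | hE
    · have := hF.reachable
      grind [Reachable.trans]
    · obtain ⟨⟨rfl, rfl⟩ | ⟨rfl, rfl⟩, -⟩ := (edge_adj ..).mp hE <;>
        grind [Reachable.refl]

lemma Reachable.exists_adj_reachable_deleteEdges (h : F.Reachable a b) (hab : a ≠ b) :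
    ∃ w, F.Adj a w ∧ ∀ c, (F.deleteEdges {s(a, c)}).Reachable w b := by
  classical
  obtain ⟨p, hp⟩ := h.some.toPath
  cases p with
  | nil => exact absurd rfl hab
  | cons haw q =>
    refine ⟨_, haw, fun c => reachable_deleteEdges_iff_exists_walk.mpr ⟨q, fun hq => ?_⟩⟩
    exact (Walk.cons_isPath_iff _ _).mp hp |>.2 (q.fst_mem_support_of_mem_edges hq)

lemma IsAcyclic.not_reachable_deleteEdges (hF : F.IsAcyclic) (h : F.Adj u v) :
    ¬(F.deleteEdges {s(u, v)}).Reachable u v :=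
  isBridge_iff.mp (isAcyclic_iff_forall_adj_isBridge.mp hF h)

lemma IsAcyclic.exists_adj_not_reachable_deleteEdges (hF : F.IsAcyclic)
    (hj : 1 < (F.neighborSet j).ncard) (a : V) :
    ∃ u, F.Adj j u ∧ ¬(F.deleteEdges {s(j, u)}).Reachable a u := by
  by_cases hja : F.Reachable j a ∧ j ≠ a
  · obtain ⟨w, hjw, hwa⟩ := hja.1.exists_adj_reachable_deleteEdges hja.2
    obtain ⟨u, hju, huw⟩ := Set.exists_ne_of_one_lt_ncard hj w
    refine ⟨u, hju, fun hau => hF.not_reachable_deleteEdges hju ?_⟩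
    have hjw' : (F.deleteEdges {s(j, u)}).Adj j w := by
      simp [hjw, huw.symm, hjw.ne']
    exact hjw'.reachable.trans ((hwa u).trans hau)
  · obtain ⟨u, hju⟩ := Set.nonempty_of_ncard_ne_zero (by omega : (F.neighborSet j).ncard ≠ 0)
    refine ⟨u, hju, fun hau => ?_⟩
    have hja' : j = a := by
      by_contra hne
      exact hja ⟨(hju.reachable.trans (hau.mono (deleteEdges_le _)).symm), hne⟩
    subst hja'
    exact hF.not_reachable_deleteEdges hju hau

section Finite

variable [Finite V]

lemma ncard_neighborSet_mono (h : F ≤ F') (v : V) :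
    (F.neighborSet v).ncard ≤ (F'.neighborSet v).ncard :=
  Set.ncard_le_ncard (fun _ hw => h hw)

lemma ncard_neighborSet_deleteEdges_add_one (h : F.Adj u v) :
    ((F.deleteEdges {s(u, v)}).neighborSet u).ncard + 1 = (F.neighborSet u).ncard := by
  have : (F.deleteEdges {s(u, v)}).neighborSet u = F.neighborSet u \ {v} := by
    ext w
    simp only [mem_neighborSet, deleteEdges_adj, Set.mem_singleton_iff, Set.mem_sdiff,
      Sym2.eq_iff]
    grind [Adj.ne]
  rw [this, Set.ncard_sdiff_singleton_add_one (show v ∈ F.neighborSet u from h)]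

lemma ncard_edgeSet_deleteEdges_add_one (h : F.Adj u v) :
    (F.deleteEdges {s(u, v)}).edgeSet.ncard + 1 = F.edgeSet.ncard := by
  rw [edgeSet_deleteEdges, Set.ncard_sdiff_singleton_add_one (show s(u, v) ∈ F.edgeSet from h)]

lemma ncard_edgeSet_sup_edge (h : ¬F.Reachable u v) :
    (F ⊔ edge u v).edgeSet.ncard = F.edgeSet.ncard + 1 := by
  have huv : u ≠ v := by rintro rfl; exact h .rfl
  have hnew : s(u, v) ∉ F.edgeSet := fun h' => h (Adj.reachable h')
  rw [edgeSet_sup, edgeSet_edge_of_ne huv, Set.union_singleton, Set.ncard_insert_of_notMem hnew]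

lemma IsLinearForest.anti (h : F ≤ F') (hF' : F'.IsLinearForest) : F.IsLinearForest :=
  ⟨hF'.1.anti h, fun v => (ncard_neighborSet_mono h v).trans (hF'.2 v)⟩

lemma IsLinearForest.sup_edge (hF : F.IsLinearForest) (huv : ¬F.Reachable u v)
    (hu : (F.neighborSet u).ncard ≤ 1) (hv : (F.neighborSet v).ncard ≤ 1) :
    (F ⊔ edge u v).IsLinearForest := by
  refine ⟨hF.1.sup_edge_of_not_reachable huv, fun w => ?_⟩
  have hend {u v : V} (hu : (F.neighborSet u).ncard ≤ 1) :
      ((F ⊔ edge u v).neighborSet u).ncard ≤ 2 :=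
    (Set.ncard_le_ncard neighborSet_sup_edge_subset).trans
      ((Set.ncard_insert_le _ _).trans (by omega))
  by_cases hwu : w = u
  · subst hwu
    exact hend hu
  by_cases hwv : w = v
  · subst hwv
    rw [edge_comm]
    exact hend hv
  rw [neighborSet_sup_edge_of_ne hwu hwv]
  exact hF.2 w

lemma containsLinearForest_succ_of_exchange (hF : F.IsLinearForest) (hle : F ≤ G)
    (hij : i ≠ j) (hix : i ≠ x) (hi : (F.neighborSet i).ncard ≤ 1)
    (hx : (F.neighborSet x).ncard ≤ 1) (hju : F.Adj j u) (hjx : ¬F.Adj j x)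
    (hGjx : G.Adj j x) (hGiu : G.Adj i u)
    (hjx_reach : ¬(F.deleteEdges {s(j, u)}).Reachable j x)
    (hiu_reach : ¬(F.deleteEdges {s(j, u)} ⊔ edge j x).Reachable i u) :
    containsLinearForest G (F.edgeSet.ncard + 1) := by
  set F₂ := F.deleteEdges {s(j, u)}
  have hF₂F : F₂ ≤ F := deleteEdges_le _
  have hj₂ : (F₂.neighborSet j).ncard + 1 = (F.neighborSet j).ncard :=
    ncard_neighborSet_deleteEdges_add_one hju
  have hu₂ : (F₂.neighborSet u).ncard + 1 = (F.neighborSet u).ncard := by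
    rw [← ncard_neighborSet_deleteEdges_add_one hju.symm, Sym2.eq_swap]
  have := hF.2 j
  have := hF.2 u
  have hF₃ := (hF.anti hF₂F).sup_edge hjx_reach (by omega)
    ((ncard_neighborSet_mono hF₂F x).trans hx)
  have hux : u ≠ x := by rintro rfl; exact hjx hju
  have hF₄ := hF₃.sup_edge hiu_reach
    (by rw [neighborSet_sup_edge_of_ne hij hix]; exact (ncard_neighborSet_mono hF₂F i).trans hi)
    (by rw [neighborSet_sup_edge_of_ne hju.ne' hux]; omega)
  have hle₄ : F₂ ⊔ edge j x ⊔ edge i u ≤ G := sup_le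
    (sup_le (hF₂F.trans hle) ((edge_le_iff G).mpr (.inr hGjx))) ((edge_le_iff G).mpr (.inr hGiu))
  have hcard : F₂.edgeSet.ncard + 1 = F.edgeSet.ncard := ncard_edgeSet_deleteEdges_add_one hju
  convert containsLinearForest_of_le hle₄ hF₄ using 1
  rw [ncard_edgeSet_sup_edge hiu_reach, ncard_edgeSet_sup_edge hjx_reach]
  omega

lemma containsLinearForest_succ (hF : F.IsLinearForest) (hle : F ≤ G) (hij : i ≠ j)
    (hix : ¬F.Reachable i x) (hi : (F.neighborSet i).ncard ≤ 1)
    (hx : (F.neighborSet x).ncard ≤ 1) (hGjx : G.Adj j x) (hjx : ¬F.Adj j x)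
    (hGi : ∀ z, F.Adj j z → G.Adj i z) :
    containsLinearForest G (F.edgeSet.ncard + 1) := by
  have hix' : i ≠ x := by rintro rfl; exact hix .rfl
  by_cases hjx_reach : F.Reachable j x
  · -- `u` is the first vertex on the path from `j` to `x`, so deleting `ju` separates them
    obtain ⟨u, hju, hux⟩ := hjx_reach.exists_adj_reachable_deleteEdges hGjx.ne
    have hF₂F : F.deleteEdges {s(j, u)} ≤ F := deleteEdges_le _
    refine containsLinearForest_succ_of_exchange hF hle hij hix' hi hx hju hjx hGjx (hGi u hju)
      (fun h => hF.1.not_reachable_deleteEdges hju (h.trans (hux u).symm)) (fun hiu => ?_)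
    rcases hiu.of_sup_edge with h | ⟨h, -⟩ | ⟨h, -⟩
    · exact hix ((h.mono hF₂F).trans ((hux u).mono hF₂F))
    · exact hix ((h.mono hF₂F).trans hjx_reach)
    · exact hix (h.mono hF₂F)
  by_cases hj : (F.neighborSet j).ncard ≤ 1
  · have := containsLinearForest_of_le (sup_le hle ((edge_le_iff G).mpr (.inr hGjx)))
      (hF.sup_edge hjx_reach hj hx)
    rwa [ncard_edgeSet_sup_edge hjx_reach] at this
  -- `j` has two neighbours; take `u` on the side of `j` away from `i`
  obtain ⟨u, hju, hiu⟩ := hF.1.exists_adj_not_reachable_deleteEdges (j := j) (by omega) i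
  refine containsLinearForest_succ_of_exchange hF hle hij hix' hi hx hju hjx hGjx (hGi u hju)
    (fun h => hjx_reach (h.mono (deleteEdges_le _))) (fun hiu' => ?_)
  rcases hiu'.of_sup_edge with h | ⟨-, h⟩ | ⟨-, h⟩
  · exact hiu h
  · exact hjx_reach (hju.reachable.trans (h.mono (deleteEdges_le _)).symm)
  · exact hF.1.not_reachable_deleteEdges hju h

end Finite

end SimpleGraph

section Shift

variable {n : ℕ} {G H : SimpleGraph (Fin n)} {i j a b x y z : Fin n}

lemma exists_shiftEdge_eq {e : Sym2 (Fin n)} (he : e ∈ (shiftGraph G i j).edgeSet) :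
    ∃ f ∈ G.edgeSet, shiftEdge G i j f = e := by
  rw [shiftGraph, edgeSet_fromEdgeSet] at he
  exact he.1

lemma adj_of_shiftGraph_adj_of_ne (h : (shiftGraph G i j).Adj a b) (ha : a ≠ i) (hb : b ≠ i) :
    G.Adj a b := by
  obtain ⟨f, hf, hfe⟩ := exists_shiftEdge_eq (show s(a, b) ∈ _ from h)
  unfold shiftEdge at hfe
  split_ifs at hfe with hshift
  · have : i ∈ s(a, b) := hfe ▸ Sym2.mem_map.mpr ⟨j, hshift.1, if_pos rfl⟩
    rcases Sym2.mem_iff.mp this with rfl | rfl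
    exacts [absurd rfl ha, absurd rfl hb]
  · exact show s(a, b) ∈ G.edgeSet from hfe ▸ hf

lemma adj_of_shiftGraph_adj_right (h : (shiftGraph G i j).Adj j z) (hz : z ≠ i) :
    G.Adj i z := by
  obtain ⟨f, hf, hfe⟩ := exists_shiftEdge_eq (show s(j, z) ∈ _ from h)
  unfold shiftEdge at hfe
  split_ifs at hfe with hshift
  · have : i ∈ s(j, z) := hfe ▸ Sym2.mem_map.mpr ⟨j, hshift.1, if_pos rfl⟩
    rcases Sym2.mem_iff.mp this with rfl | rfl
    exacts [absurd hshift.1 hshift.2.1, absurd rfl hz]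
  subst hfe
  by_cases hij : i = j
  · exact hij ▸ hf
  have hi : i ∉ s(j, z) := by
    rw [Sym2.mem_iff]
    rintro (rfl | rfl)
    exacts [hij rfl, hz rfl]
  have := not_not.mp fun hG => hshift ⟨Sym2.mem_mk_left _ _, hi, hG⟩
  rwa [Sym2.map_mk, if_pos rfl, if_neg h.ne'] at this

lemma adj_or_adj_of_shiftGraph_adj_left (h : (shiftGraph G i j).Adj i z) :
    G.Adj i z ∨ G.Adj j z := by
  obtain ⟨f, hf, hfe⟩ := exists_shiftEdge_eq (show s(i, z) ∈ _ from h)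
  unfold shiftEdge at hfe
  split_ifs at hfe with hshift
  · right
    obtain ⟨c, rfl⟩ := Sym2.mem_iff_exists.mp hshift.1
    have hcj : c ≠ j := by rintro rfl; exact G.irrefl hf
    have hci : c ≠ i := by rintro rfl; exact hshift.2.1 (Sym2.mem_mk_right _ _)
    rw [Sym2.map_mk, if_pos rfl, if_neg hcj, Sym2.eq_iff] at hfe
    obtain ⟨-, rfl⟩ | ⟨-, hc⟩ := hfe
    exacts [hf, absurd hc hci]
  · exact .inl (show s(i, z) ∈ G.edgeSet from hfe ▸ hf)

lemma exists_adj_not_adj_of_le_shiftGraph (hHS : H ≤ shiftGraph G i j) (hHG : ¬H ≤ G) :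
    ∃ x, H.Adj i x ∧ ¬G.Adj i x := by
  obtain ⟨a, b, hab, hGab⟩ : ∃ a b, H.Adj a b ∧ ¬G.Adj a b := by
    simpa [le_iff_adj] using hHG
  by_cases ha : a = i
  · exact ⟨b, ha ▸ hab, ha ▸ hGab⟩
  by_cases hb : b = i
  · exact ⟨a, hb ▸ hab.symm, fun h => hGab (hb ▸ h.symm)⟩
  exact absurd (adj_of_shiftGraph_adj_of_ne (hHS hab) ha hb) hGab

lemma adj_swap_of_shiftGraph_adj (h : (shiftGraph G i j).Adj a b) (ha : a ≠ i) (hb : b ≠ i) :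
    G.Adj (Equiv.swap i j a) (Equiv.swap i j b) := by
  have hright : ∀ v, (shiftGraph G i j).Adj j v → v ≠ i → G.Adj i (Equiv.swap i j v) :=
    fun v hv hvi => by
      rw [Equiv.swap_apply_of_ne_of_ne hvi hv.ne']
      exact adj_of_shiftGraph_adj_right hv hvi
  by_cases haj : a = j
  · subst haj
    rw [Equiv.swap_apply_right]
    exact hright b h hb
  by_cases hbj : b = j
  · subst hbj
    rw [Equiv.swap_apply_right]
    exact (hright a h.symm ha).symm
  rw [Equiv.swap_apply_of_ne_of_ne ha haj, Equiv.swap_apply_of_ne_of_ne hb hbj]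
  exact adj_of_shiftGraph_adj_of_ne h ha hb

lemma map_swap_le_of_le_shiftGraph (hHS : H ≤ shiftGraph G i j)
    (hi : ∀ z ≠ j, H.Adj i z → G.Adj j z) : H.map (Equiv.swap i j) ≤ G := by
  have hleft : ∀ v, H.Adj i v → G.Adj j (Equiv.swap i j v) := by
    intro v hv
    by_cases hvj : v = j
    · subst hvj
      rw [Equiv.swap_apply_right]
      exact ((adj_or_adj_of_shiftGraph_adj_left (hHS hv)).resolve_right G.irrefl).symm
    · rw [Equiv.swap_apply_of_ne_of_ne hv.ne' hvj]
      exact hi v hvj hv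
  rintro _ _ ⟨-, u, v, huv, rfl, rfl⟩
  by_cases hu : u = i
  · subst hu
    rw [Equiv.swap_apply_left]
    exact hleft v huv
  by_cases hv : v = i
  · subst hv
    rw [Equiv.swap_apply_left]
    exact (hleft u huv.symm).symm
  exact adj_swap_of_shiftGraph_adj (hHS huv) hu hv

lemma containsLinearForest_of_le_shiftGraph_of_adj_of_adj (hij : i ≠ j)
    (hHS : H ≤ shiftGraph G i j) (hH : H.IsLinearForest) (hx : H.Adj i x) (hGx : ¬G.Adj i x)
    (hy : H.Adj i y) (hyj : y ≠ j) (hGy : ¬G.Adj j y) :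
    containsLinearForest G H.edgeSet.ncard := by
  have hGjx : G.Adj j x := (adj_or_adj_of_shiftGraph_adj_left (hHS hx)).resolve_left hGx
  have hGiy : G.Adj i y := (adj_or_adj_of_shiftGraph_adj_left (hHS hy)).resolve_right hGy
  have hxy : x ≠ y := by rintro rfl; exact hGx hGiy
  have hNi : H.neighborSet i = {x, y} := by
    refine (Set.eq_of_subset_of_ncard_le ?_ ?_ (Set.toFinite _)).symm
    · rintro c (rfl | rfl)
      exacts [hx, hy]
    · rw [Set.ncard_pair hxy]
      exact hH.2 i
  set F := H.deleteEdges {s(i, x)}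
  have hFH : F ≤ H := deleteEdges_le _
  have hFi : ∀ z, F.Adj i z → G.Adj i z := by
    intro z hz
    obtain ⟨hz, hzx⟩ := (deleteEdges_adj ..).mp hz
    have : z ∈ H.neighborSet i := hz
    rw [hNi] at this
    obtain rfl | rfl := this
    exacts [absurd rfl hzx, hGiy]
  have hFG : F ≤ G := by
    intro a b hab
    by_cases ha : a = i
    · exact ha ▸ hFi b (ha ▸ hab)
    by_cases hb : b = i
    · exact (hb ▸ hFi a (hb ▸ hab.symm)).symm
    exact adj_of_shiftGraph_adj_of_ne (hHS (hFH hab)) ha hb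
  have hjx : ¬F.Adj j x := fun h =>
    hGx (adj_of_shiftGraph_adj_right (hHS (hFH h)) hx.ne')
  have hGj : ∀ z, F.Adj j z → G.Adj i z := by
    intro z hz
    refine adj_of_shiftGraph_adj_right (hHS (hFH hz)) ?_
    rintro rfl
    have : j ∈ H.neighborSet z := (hFH hz).symm
    rw [hNi] at this
    obtain rfl | rfl := this
    exacts [G.irrefl hGjx, hyj rfl]
  have hFi₁ : (F.neighborSet i).ncard + 1 = (H.neighborSet i).ncard :=
    ncard_neighborSet_deleteEdges_add_one hx
  have hFx₁ : (F.neighborSet x).ncard + 1 = (H.neighborSet x).ncard := by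
    rw [← ncard_neighborSet_deleteEdges_add_one hx.symm, Sym2.eq_swap]
  have hFcard : F.edgeSet.ncard + 1 = H.edgeSet.ncard := ncard_edgeSet_deleteEdges_add_one hx
  have := hH.2 i
  have := hH.2 x
  rw [← hFcard]
  exact containsLinearForest_succ (hH.anti hFH) hFG hij (hH.1.not_reachable_deleteEdges hx)
    (by omega) (by omega) hGjx hjx hGj

end Shift

/-- If `G` contains no linear forest with `k` edges, then neither does `S_{ij}(G)`. -/
theorem stmt1 {n k : ℕ} (G : SimpleGraph (Fin n)) (i j : Fin n) (hij : i < j)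
    (h : ¬ containsLinearForest G k) : ¬ containsLinearForest (shiftGraph G i j) k := by
  rintro ⟨H, hHS, hac, hdeg, rfl⟩
  have hH : H.IsLinearForest := ⟨hac, hdeg⟩
  refine h ?_
  by_cases hHG : H ≤ G
  · exact containsLinearForest_of_le hHG hH
  by_cases hswap : ∀ z ≠ j, H.Adj i z → G.Adj j z
  · rw [← ncard_edgeSet_map (Equiv.swap i j).toEmbedding]
    exact containsLinearForest_of_le (map_swap_le_of_le_shiftGraph hHS hswap) (hH.map _)
  push Not at hswap
  obtain ⟨y, hyj, hy, hGy⟩ := hswap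
  obtain ⟨x, hx, hGx⟩ := exists_adj_not_adj_of_le_shiftGraph hHS hHG
  exact containsLinearForest_of_le_shiftGraph_of_adj_of_adj hij.ne hHS hH hx hGx hy hyj hGy
end

section
/- Let G be a graph on vertex set {1,...,n}. For any 1 ≤ i < j ≤ n, the number of s-cliques in the shifted graph S_{ij}(G) is at least the number of s-cliques in G. -/
/-!
Shifting can destroy a clique `S` of `G` only if `j ∈ S`, `i ∉ S` and some vertex of `S` other
than `j` is not adjacent to `i`. Then `S - j + i` is a clique of `S_{ij}(G)`: each edge `jv` of
`S` was either moved to `iv` or `iv` was already there. It is not a clique of `G`, since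
otherwise `S` would have survived. So sending surviving cliques to themselves and destroyed
cliques `S` to `S - j + i` injects the `s`-cliques of `G` into those of `S_{ij}(G)`.
-/

open SimpleGraph Finset

lemma Finset.insert_erase_injOn {α : Type*} [DecidableEq α] (i j : α) :
    Set.InjOn (fun T : Finset α => insert i (T.erase j)) {T | j ∈ T ∧ i ∉ T} := by
  rintro S ⟨hjS, hiS⟩ T ⟨hjT, hiT⟩ h
  have h' : S.erase j = T.erase j := by
    simpa [erase_insert (fun h => hiS (mem_of_mem_erase h)),
      erase_insert (fun h => hiT (mem_of_mem_erase h))] using congrArg (erase · i) h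
  rw [← insert_erase hjS, ← insert_erase hjT, h']

section Shift

variable {n : ℕ} {G : SimpleGraph (Fin n)} {i j a b : Fin n}

lemma shiftEdge_eq_self_of_notMem {e : Sym2 (Fin n)} (h : j ∉ e) : shiftEdge G i j e = e := by
  simp [shiftEdge, h]

lemma shiftEdge_eq_self_of_mem {e : Sym2 (Fin n)} (h : i ∈ e) : shiftEdge G i j e = e := by
  simp [shiftEdge, h]

lemma shiftGraph_adj_of_shiftEdge_eq (h : G.Adj a b)
    (he : shiftEdge G i j s(a, b) = s(a, b)) : (shiftGraph G i j).Adj a b := by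
  rw [shiftGraph, fromEdgeSet_adj]
  exact ⟨⟨s(a, b), h, he⟩, h.ne⟩

lemma shiftGraph_adj_of_ne (h : G.Adj a b) (ha : a ≠ j) (hb : b ≠ j) :
    (shiftGraph G i j).Adj a b :=
  shiftGraph_adj_of_shiftEdge_eq h <| shiftEdge_eq_self_of_notMem <| by
    simp [Sym2.mem_iff, ha.symm, hb.symm]

lemma shiftGraph_adj_j_of_adj (h : G.Adj j b) (hb : b = i ∨ G.Adj i b) :
    (shiftGraph G i j).Adj j b := by
  refine shiftGraph_adj_of_shiftEdge_eq h ?_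
  rcases hb with rfl | hib
  · exact shiftEdge_eq_self_of_mem (Sym2.mem_mk_right _ _)
  · simp [shiftEdge, h.ne.symm, hib]

lemma shiftGraph_adj_i_of_adj_j (hij : i ≠ j) (h : G.Adj j a) (ha : a ≠ i) :
    (shiftGraph G i j).Adj i a := by
  by_cases hia : G.Adj i a
  · exact shiftGraph_adj_of_shiftEdge_eq hia (shiftEdge_eq_self_of_mem (Sym2.mem_mk_left _ _))
  · rw [shiftGraph, fromEdgeSet_adj]
    refine ⟨⟨s(j, a), h, ?_⟩, ha.symm⟩
    simp [shiftEdge, hij, ha.symm, h.ne.symm, hia]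

variable {S T : Finset (Fin n)}

lemma isClique_shiftGraph_of_forall_adj (hT : G.IsClique (T : Set (Fin n)))
    (H : ∀ a ∈ T, a ≠ i → a ≠ j → G.Adj i a) :
    (shiftGraph G i j).IsClique (T : Set (Fin n)) := by
  have hj : ∀ b ∈ T, j ∈ T → b ≠ j → (shiftGraph G i j).Adj j b := fun b hb hjT hbj =>
    shiftGraph_adj_j_of_adj (hT hjT hb hbj.symm) ((eq_or_ne b i).imp_right (H b hb · hbj))
  intro a ha b hb hab
  by_cases haj : a = j
  · subst haj
    exact hj b hb ha (Ne.symm hab)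
  by_cases hbj : b = j
  · subst hbj
    exact (hj a ha hb hab).symm
  exact shiftGraph_adj_of_ne (hT ha hb hab) haj hbj

lemma mem_and_notMem_of_not_isClique_shiftGraph (hS : G.IsClique (S : Set (Fin n)))
    (hS' : ¬ (shiftGraph G i j).IsClique (S : Set (Fin n))) : j ∈ S ∧ i ∉ S := by
  constructor
  · by_contra hj
    exact hS' fun a ha b hb hab => shiftGraph_adj_of_ne (hS ha hb hab)
      (ne_of_mem_of_not_mem ha hj) (ne_of_mem_of_not_mem hb hj)
  · intro hi
    exact hS' (isClique_shiftGraph_of_forall_adj hS fun a ha hai _ => hS hi ha (Ne.symm hai))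

lemma isClique_shiftGraph_of_isClique_insert_erase (hT : G.IsClique (T : Set (Fin n)))
    (hT' : G.IsClique ((insert i (T.erase j) : Finset (Fin n)) : Set (Fin n))) :
    (shiftGraph G i j).IsClique (T : Set (Fin n)) :=
  isClique_shiftGraph_of_forall_adj hT fun _ ha hai haj =>
    hT' (mem_insert_self i _) (mem_insert_of_mem (mem_erase.2 ⟨haj, ha⟩)) (Ne.symm hai)

lemma isNClique_shiftGraph_insert_erase {s : ℕ} (hT : G.IsNClique s T) (hj : j ∈ T)
    (hi : i ∉ T) : (shiftGraph G i j).IsNClique s (insert i (T.erase j)) := by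
  have hij : i ≠ j := by rintro rfl; exact hi hj
  have hi' : i ∉ T.erase j := fun h => hi (mem_of_mem_erase h)
  refine ⟨?_, by rw [card_insert_of_notMem hi', card_erase_add_one hj, hT.2]⟩
  rw [coe_insert, isClique_insert]
  refine ⟨fun a ha b hb hab => ?_, fun b hb _ => ?_⟩
  · exact shiftGraph_adj_of_ne (hT.1 (mem_of_mem_erase ha) (mem_of_mem_erase hb) hab)
      (ne_of_mem_erase ha) (ne_of_mem_erase hb)
  · exact shiftGraph_adj_i_of_adj_j hij (hT.1 hj (mem_of_mem_erase hb) (ne_of_mem_erase hb).symm)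
      (fun h => hi (h ▸ mem_of_mem_erase hb))

end Shift

theorem stmt2_general {n : ℕ} (G : SimpleGraph (Fin n)) (i j : Fin n) (s : ℕ) :
    cliqueCount G s ≤ cliqueCount (shiftGraph G i j) s := by
  classical
  set G' := shiftGraph G i j
  have destroyed {S} (hS : G.IsNClique s S) (hS' : ¬ G'.IsNClique s S) : j ∈ S ∧ i ∉ S :=
    mem_and_notMem_of_not_isClique_shiftGraph hS.1 fun h => hS' ⟨h, hS.2⟩
  have survives {S T} (hS : G.IsNClique s S) (hT : G.IsNClique s T)
      (hST : S = insert i (T.erase j)) : G'.IsNClique s T :=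
    ⟨isClique_shiftGraph_of_isClique_insert_erase hT.1 (hST ▸ hS.1), hT.2⟩
  refine Set.ncard_le_ncard_of_injOn
    (fun S => if G'.IsNClique s S then S else insert i (S.erase j)) (fun S hS => ?_) ?_
  · split_ifs with hS'
    · exact hS'
    · exact isNClique_shiftGraph_insert_erase hS (destroyed hS hS').1 (destroyed hS hS').2
  · intro S hS T hT hST
    dsimp only at hST
    split_ifs at hST with hS' hT' hT'
    · exact hST
    · exact absurd (survives hS hT hST) hT'
    · exact absurd (survives hT hS hST.symm) hS'
    · exact insert_erase_injOn i j (destroyed hS hS') (destroyed hT hT') hST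

/-- Shifting does not decrease the number of `s`-cliques. -/
theorem stmt2 {n : ℕ} (G : SimpleGraph (Fin n)) (i j : Fin n) (hij : i < j) (s : ℕ) :
    cliqueCount G s ≤ cliqueCount (shiftGraph G i j) s :=
  stmt2_general G i j s
end

section
/- Let G be a graph on n vertices and u, v two nonadjacent vertices with d_G(u) + d_G(v) ≥ k. Then G contains no linear forest with k edges if and only if G + uv contains no linear forest with k edges. -/
open SimpleGraph Finset

namespace LF

variable {V : Type*} [Fintype V]
set_option linter.unusedSectionVars false

/-- abbreviation: delete a single edge -/
noncomputable def de (F : SimpleGraph V) (a b : V) : SimpleGraph V :=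
  F.deleteEdges {s(a,b)}

lemma de_adj {F : SimpleGraph V} {a b x y : V} :
    (de F a b).Adj x y ↔ F.Adj x y ∧ s(x,y) ≠ s(a,b) := by
  simp [de]

lemma de_le {F : SimpleGraph V} {a b : V} : de F a b ≤ F := SimpleGraph.deleteEdges_le _

lemma reach_mono {F F' : SimpleGraph V} (h : F ≤ F') {x y : V}
    (hr : F.Reachable x y) : F'.Reachable x y := hr.mono h

lemma acyclic_anti {F F' : SimpleGraph V} (h : F ≤ F') (hA : F'.IsAcyclic) : F.IsAcyclic := by
  intro z c hc
  exact hA (c.mapLe h) (hc.mapLe h)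

/-- bridge property: removing an edge of an acyclic graph disconnects its endpoints -/
lemma bridge {F : SimpleGraph V} (hA : F.IsAcyclic) {a b : V} (hab : F.Adj a b) :
    ¬ (de F a b).Reachable a b := by
  have := (isAcyclic_iff_forall_adj_isBridge.mp hA) hab
  rw [isBridge_iff] at this
  exact this

/-- split lemma : reachability after deleting an edge -/
lemma split {F : SimpleGraph V} {a b : V} {p q : V} (hr : F.Reachable p q) :
    (de F a b).Reachable p q ∨
      ((de F a b).Reachable p a ∧ (de F a b).Reachable b q) ∨
      ((de F a b).Reachable p b ∧ (de F a b).Reachable a q) := by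
  set F' := de F a b with hF'
  obtain ⟨w⟩ := hr
  induction w with
  | nil => exact Or.inl (Reachable.refl _)
  | @cons x c q hadj w ih =>
    rcases ih with h | ⟨h1, h2⟩ | ⟨h1, h2⟩
    · by_cases he : s(x, c) = s(a, b)
      · rw [Sym2.eq_iff] at he
        rcases he with ⟨rfl, rfl⟩ | ⟨rfl, rfl⟩
        · exact Or.inr (Or.inl ⟨Reachable.refl _, h⟩)
        · exact Or.inr (Or.inr ⟨Reachable.refl _, h⟩)
      · have : F'.Adj x c := de_adj.mpr ⟨hadj, he⟩
        exact Or.inl ((this.reachable).trans h)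
    · by_cases he : s(x, c) = s(a, b)
      · rw [Sym2.eq_iff] at he
        rcases he with ⟨rfl, rfl⟩ | ⟨rfl, rfl⟩
        · -- x = a, c = b : h1 : F'.Reachable b a, h2 : F'.Reachable b q
          exact Or.inr (Or.inl ⟨Reachable.refl _, h2⟩)
        · -- x = b, c = a : h1 : F'.Reachable a a, h2 : F'.Reachable b q
          exact Or.inl h2
      · have : F'.Adj x c := de_adj.mpr ⟨hadj, he⟩
        exact Or.inr (Or.inl ⟨(this.reachable).trans h1, h2⟩)
    · by_cases he : s(x, c) = s(a, b)
      · rw [Sym2.eq_iff] at he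
        rcases he with ⟨rfl, rfl⟩ | ⟨rfl, rfl⟩
        · exact Or.inl h2
        · exact Or.inr (Or.inr ⟨Reachable.refl _, h2⟩)
      · have : F'.Adj x c := de_adj.mpr ⟨hadj, he⟩
        exact Or.inr (Or.inr ⟨(this.reachable).trans h1, h2⟩)


/-- add an edge -/
noncomputable def ae (F : SimpleGraph V) (a b : V) : SimpleGraph V :=
  F ⊔ fromEdgeSet {s(a,b)}

lemma ae_adj {F : SimpleGraph V} {a b x y : V} :
    (ae F a b).Adj x y ↔ F.Adj x y ∨ (s(x,y) = s(a,b) ∧ x ≠ y) := by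
  simp [ae, sup_adj, fromEdgeSet_adj]

lemma ae_adj_self {F : SimpleGraph V} {a b : V} (hne : a ≠ b) : (ae F a b).Adj a b :=
  ae_adj.mpr (Or.inr ⟨rfl, hne⟩)

lemma de_ae_le {F : SimpleGraph V} {a b : V} : de (ae F a b) a b ≤ F := by
  intro x y hxy
  rw [de, SimpleGraph.deleteEdges_adj] at hxy
  rcases ae_adj.mp hxy.1 with h | ⟨h, _⟩
  · exact h
  · exact absurd h hxy.2

lemma ae_acyclic {F : SimpleGraph V} {a b : V} (hA : F.IsAcyclic)
    (hnr : ¬ F.Reachable a b) : (ae F a b).IsAcyclic := by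
  intro z c hc
  by_cases he : s(a,b) ∈ c.edges
  · have hcyc : ∃ (u : V) (p : (ae F a b).Walk u u), p.IsCycle ∧ s(a, b) ∈ p.edges :=
      ⟨z, c, hc, he⟩
    have := (adj_and_reachable_delete_edges_iff_exists_cycle).mpr hcyc
    have h2 : (de (ae F a b) a b).Reachable a b := this.2
    exact hnr (h2.mono de_ae_le)
  · have hp : ∀ e ∈ c.edges, e ∉ ({s(a,b)} : Set (Sym2 V)) := by
      intro e hee
      simp only [Set.mem_singleton_iff]
      rintro rfl; exact he hee
    have hc' := Walk.IsCycle.toDeleteEdges _ ({s(a,b)} : Set (Sym2 V)) hc hp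
    have hle : (ae F a b).deleteEdges {s(a,b)} ≤ F := de_ae_le
    exact hA ((c.toDeleteEdges {s(a,b)} hp).mapLe hle) (hc'.mapLe hle)

lemma ae_nbr {F : SimpleGraph V} {a b : V} (z : V) :
    (ae F a b).neighborSet z ⊆ insert b (insert a (F.neighborSet z)) := by
  intro y hy
  rw [mem_neighborSet, ae_adj] at hy
  rcases hy with h | ⟨h, hne⟩
  · simp [h]
  · rw [Sym2.eq_iff] at h
    rcases h with ⟨rfl, rfl⟩ | ⟨rfl, rfl⟩ <;> simp

lemma ae_nbr_other {F : SimpleGraph V} {a b : V} {z : V} (h1 : z ≠ a) (h2 : z ≠ b) :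
    (ae F a b).neighborSet z = F.neighborSet z := by
  ext y
  rw [mem_neighborSet, mem_neighborSet, ae_adj]
  constructor
  · rintro (h | ⟨h, hne⟩)
    · exact h
    · rw [Sym2.eq_iff] at h
      rcases h with ⟨rfl, rfl⟩ | ⟨rfl, rfl⟩
      · exact absurd rfl h1
      · exact absurd rfl h2
  · exact Or.inl

lemma ae_nbr_a {F : SimpleGraph V} {a b : V} :
    (ae F a b).neighborSet a ⊆ insert b (F.neighborSet a) := by
  intro y hy
  rw [mem_neighborSet, ae_adj] at hy
  rcases hy with h | ⟨h, hne⟩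
  · simp [h]
  · rcases Sym2.eq_iff.mp h with ⟨-, rfl⟩ | ⟨rfl, rfl⟩
    · simp
    · exact absurd rfl hne

lemma ae_nbr_b {F : SimpleGraph V} {a b : V} :
    (ae F a b).neighborSet b ⊆ insert a (F.neighborSet b) := by
  intro y hy
  rw [mem_neighborSet, ae_adj] at hy
  rcases hy with h | ⟨h, hne⟩
  · simp [h]
  · rcases Sym2.eq_iff.mp h with ⟨rfl, rfl⟩ | ⟨-, rfl⟩
    · exact absurd rfl hne
    · simp

lemma ae_edgeSet {F : SimpleGraph V} {a b : V} (hne : a ≠ b) :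
    (ae F a b).edgeSet = insert s(a,b) F.edgeSet := by
  rw [ae, edgeSet_sup, edgeSet_fromEdgeSet]
  rw [Set.union_comm]
  congr 1
  ext e
  simp only [Set.mem_diff, Set.mem_singleton_iff, Set.mem_setOf_eq]
  constructor
  · rintro ⟨rfl, _⟩; rfl
  · rintro rfl; exact ⟨rfl, by simp [hne]⟩

/-- main add-edge lemma: adding an edge between two low degree vertices in
different components keeps a linear forest -/
lemma addEdge {F G : SimpleGraph V} {a b : V} (hFG : F ≤ G) (hA : F.IsAcyclic)
    (hd2 : ∀ z, (F.neighborSet z).ncard ≤ 2) (hab : G.Adj a b)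
    (hnr : ¬ F.Reachable a b) (hda : (F.neighborSet a).ncard ≤ 1)
    (hdb : (F.neighborSet b).ncard ≤ 1) :
    ae F a b ≤ G ∧ (ae F a b).IsAcyclic ∧ (∀ z, ((ae F a b).neighborSet z).ncard ≤ 2) ∧
      (ae F a b).edgeSet = insert s(a,b) F.edgeSet ∧ s(a,b) ∉ F.edgeSet := by
  have hne : a ≠ b := hab.ne
  refine ⟨?_, ae_acyclic hA hnr, ?_, ae_edgeSet hne, ?_⟩
  · intro x y hxy
    rcases ae_adj.mp hxy with h | ⟨h, hxyne⟩
    · exact hFG h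
    · rw [Sym2.eq_iff] at h
      rcases h with ⟨rfl, rfl⟩ | ⟨rfl, rfl⟩
      · exact hab
      · exact hab.symm
  · intro z
    by_cases h1 : z = a
    · rw [h1]
      calc ((ae F a b).neighborSet a).ncard ≤ (insert b (F.neighborSet a)).ncard :=
            Set.ncard_le_ncard ae_nbr_a (Set.Finite.insert _ (Set.toFinite _))
        _ ≤ (F.neighborSet a).ncard + 1 := Set.ncard_insert_le _ _
        _ ≤ 2 := by omega
    by_cases h2 : z = b
    · rw [h2]
      calc ((ae F a b).neighborSet b).ncard ≤ (insert a (F.neighborSet b)).ncard :=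
            Set.ncard_le_ncard ae_nbr_b (Set.Finite.insert _ (Set.toFinite _))
        _ ≤ (F.neighborSet b).ncard + 1 := Set.ncard_insert_le _ _
        _ ≤ 2 := by omega
    · rw [ae_nbr_other h1 h2]
      exact hd2 z
  · intro hmem
    exact hnr (((mem_edgeSet _).mp hmem).reachable)


lemma de_comm {F : SimpleGraph V} {a b : V} : de F a b = de F b a := by
  rw [de, de, Sym2.eq_swap]

lemma de_edgeSet {F : SimpleGraph V} {a b : V} :
    (de F a b).edgeSet = F.edgeSet \ {s(a,b)} := SimpleGraph.edgeSet_deleteEdges _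

lemma de_nbr_fst {F : SimpleGraph V} {a b : V} :
    (de F a b).neighborSet a = F.neighborSet a \ {b} := by
  ext y
  simp only [mem_neighborSet, de_adj, Set.mem_diff, Set.mem_singleton_iff]
  constructor
  · rintro ⟨h, hne⟩
    refine ⟨h, fun hy => hne ?_⟩
    rw [hy]
  · rintro ⟨h, hne⟩
    refine ⟨h, fun he => hne ?_⟩
    rcases Sym2.eq_iff.mp he with ⟨-, rfl⟩ | ⟨rfl, rfl⟩
    · rfl
    · rfl

lemma de_nbr_other {F : SimpleGraph V} {a b z : V} (h1 : z ≠ a) (h2 : z ≠ b) :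
    (de F a b).neighborSet z = F.neighborSet z := by
  ext y
  simp only [mem_neighborSet, de_adj]
  constructor
  · exact fun h => h.1
  · intro h
    refine ⟨h, fun he => ?_⟩
    rcases Sym2.eq_iff.mp he with ⟨rfl, rfl⟩ | ⟨rfl, rfl⟩
    · exact h1 rfl
    · exact h2 rfl

lemma de_deg_add_one {F : SimpleGraph V} {a b : V} (h : F.Adj a b) :
    ((de F a b).neighborSet a).ncard + 1 = (F.neighborSet a).ncard := by
  rw [de_nbr_fst]
  exact Set.ncard_diff_singleton_add_one h (Set.toFinite _)

lemma de_deg_le {F : SimpleGraph V} {a b : V} (z : V) :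
    ((de F a b).neighborSet z).ncard ≤ (F.neighborSet z).ncard := by
  apply Set.ncard_le_ncard _ (Set.toFinite _)
  intro y hy
  exact (de_adj.mp hy).1

lemma de_edge_count {F : SimpleGraph V} {a b : V} (h : F.Adj a b) :
    (de F a b).edgeSet.ncard + 1 = F.edgeSet.ncard := by
  rw [de_edgeSet]
  exact Set.ncard_diff_singleton_add_one ((mem_edgeSet F).mpr h) (Set.toFinite _)

/-- a vertex reachable from a distinct vertex has a neighbor -/
lemma reach_deg {F : SimpleGraph V} {x y : V} (h : F.Reachable x y) (hne : x ≠ y) :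
    1 ≤ (F.neighborSet x).ncard := by
  obtain ⟨p⟩ := h
  cases p with
  | nil => exact absurd rfl hne
  | cons hadj q =>
    rw [Nat.one_le_iff_ne_zero, Ne, Set.ncard_eq_zero (Set.toFinite _)]
    intro hemp
    have : _ ∈ F.neighborSet x := hadj
    rw [hemp] at this
    exact this

/-- E1: the edge at w towards t -/
lemma toward {F : SimpleGraph V} (hA : F.IsAcyclic) {t w : V} (h : F.Reachable t w)
    (hne : w ≠ t) : ∃ x, F.Adj w x ∧ ¬ (de F w x).Reachable w t ∧ (de F w x).Reachable x t := by
  classical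
  obtain ⟨p0⟩ := h.symm
  obtain ⟨p, hp⟩ := p0.toPath
  cases p with
  | nil => exact absurd rfl hne
  | @cons _ c _ hadj q =>
    rw [Walk.cons_isPath_iff] at hp
    have hq : ∀ e ∈ q.edges, e ∉ ({s(w,c)} : Set (Sym2 V)) := by
      intro e he
      simp only [Set.mem_singleton_iff]
      rintro rfl
      exact hp.2 (Walk.fst_mem_support_of_mem_edges q he)
    have hreach : (de F w c).Reachable c t := ⟨q.toDeleteEdges {s(w,c)} hq⟩
    refine ⟨c, hadj, fun hr => ?_, hreach⟩
    exact bridge hA hadj (hr.trans hreach.symm)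

/-- E2: the edge at w away from t (w has degree 2) -/
lemma awayfrom {F : SimpleGraph V} (hA : F.IsAcyclic) {t w : V} (h : F.Reachable t w)
    (hne : w ≠ t) (hdeg : (F.neighborSet w).ncard = 2) :
    ∃ x, F.Adj w x ∧ ¬ (de F w x).Reachable x t ∧ (de F w x).Reachable w t := by
  classical
  obtain ⟨p0⟩ := h.symm
  obtain ⟨p, hp⟩ := p0.toPath
  cases p with
  | nil => exact absurd rfl hne
  | @cons _ c _ hadj q =>
    rw [Walk.cons_isPath_iff] at hp
    -- pick the other neighbor x1 of w
    have hc : c ∈ F.neighborSet w := hadj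
    have hx1 : (F.neighborSet w \ {c}).Nonempty := by
      apply Set.nonempty_of_ncard_ne_zero
      have := Set.ncard_diff_singleton_add_one hc (Set.toFinite _)
      omega
    obtain ⟨x1, hx1mem⟩ := hx1
    obtain ⟨hx1adj, hx1ne⟩ := hx1mem
    have hx1ne : x1 ≠ c := hx1ne
    -- the path (cons hadj q) avoids the edge s(w,x1)
    have hq : ∀ e ∈ (Walk.cons hadj q).edges, e ∉ ({s(w,x1)} : Set (Sym2 V)) := by
      intro e he
      simp only [Set.mem_singleton_iff]
      rintro rfl
      rw [Walk.edges_cons] at he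
      rcases List.mem_cons.mp he with heq | he'
      · rw [Sym2.congr_right] at heq
        exact hx1ne heq
      · exact hp.2 (Walk.fst_mem_support_of_mem_edges q he')
    have hwt : (de F w x1).Reachable w t := ⟨(Walk.cons hadj q).toDeleteEdges {s(w,x1)} hq⟩
    refine ⟨x1, hx1adj, fun hr => ?_, hwt⟩
    exact bridge hA (hx1adj : F.Adj w x1) (hwt.trans hr.symm)


/-- every component of a finite acyclic graph has a vertex of degree ≤ 1 -/
lemma exists_leaf {F : SimpleGraph V} (hA : F.IsAcyclic) (w : V) :
    ∃ t, F.Reachable w t ∧ (F.neighborSet t).ncard ≤ 1 := by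
  suffices h : ∀ (m : ℕ) (F : SimpleGraph V), F.edgeSet.ncard = m → F.IsAcyclic → ∀ w : V,
      ∃ t, F.Reachable w t ∧ (F.neighborSet t).ncard ≤ 1 ∧
        (1 ≤ (F.neighborSet w).ncard → t ≠ w) by
    obtain ⟨t, h1, h2, -⟩ := h F.edgeSet.ncard F rfl hA w
    exact ⟨t, h1, h2⟩
  intro m
  induction m using Nat.strong_induction_on with
  | _ m ih =>
    intro F hm hA w
    by_cases hdeg0 : (F.neighborSet w).ncard = 0
    · exact ⟨w, Reachable.refl _, by omega, fun h => by omega⟩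
    have hne : (F.neighborSet w).Nonempty := Set.nonempty_of_ncard_ne_zero hdeg0
    obtain ⟨x1, hx1⟩ := hne
    have hadj : F.Adj w x1 := hx1
    have hwx1 : w ≠ x1 := hadj.ne
    have hdrop : ((de F w x1).neighborSet w).ncard + 1 = (F.neighborSet w).ncard :=
      de_deg_add_one hadj
    have hdropx : ((de F w x1).neighborSet x1).ncard + 1 = (F.neighborSet x1).ncard := by
      have := de_deg_add_one (F := F) (a := x1) (b := w) hadj.symm
      rwa [de_comm (a := x1) (b := w)] at this
    have hcount : (de F w x1).edgeSet.ncard + 1 = m := by rw [de_edge_count hadj, hm]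
    have hA' : (de F w x1).IsAcyclic := acyclic_anti de_le hA
    by_cases hdeg : (F.neighborSet w).ncard ≤ 1
    · -- degree exactly 1; recurse from x1
      obtain ⟨t, ht1, ht2, ht3⟩ := ih (de F w x1).edgeSet.ncard (by omega) _ rfl hA' x1
      by_cases hx1deg : 1 ≤ ((de F w x1).neighborSet x1).ncard
      · have htx1 : t ≠ x1 := ht3 hx1deg
        have htw : t ≠ w := by
          intro hde
          have h1 : 1 ≤ ((de F w x1).neighborSet t).ncard := reach_deg ht1.symm htx1
          rw [hde] at h1
          omega
        refine ⟨t, hadj.reachable.trans (ht1.mono de_le), ?_, fun _ => htw⟩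
        rwa [de_nbr_other htw htx1] at ht2
      · refine ⟨x1, hadj.reachable, by omega, fun _ => hwx1.symm⟩
    · -- degree 2; recurse from w
      obtain ⟨t, ht1, ht2, ht3⟩ := ih (de F w x1).edgeSet.ncard (by omega) _ rfl hA' w
      have htw : t ≠ w := ht3 (by omega)
      have htx1 : t ≠ x1 := by
        intro hde
        rw [hde] at ht1
        exact bridge hA hadj ht1
      refine ⟨t, ht1.mono de_le, ?_, fun _ => htw⟩
      rwa [de_nbr_other htw htx1] at ht2


/-- canonical low-degree vertex in the component of `w` -/
noncomputable def tgt (F : SimpleGraph V) (w : V) : V :=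
  @Classical.epsilon V ⟨w⟩ (fun t => F.Reachable w t ∧ (F.neighborSet t).ncard ≤ 1)

lemma tgt_spec {F : SimpleGraph V} (hA : F.IsAcyclic) (w : V) :
    F.Reachable w (tgt F w) ∧ (F.neighborSet (tgt F w)).ncard ≤ 1 :=
  Classical.epsilon_spec (exists_leaf hA w)

lemma tgt_eq {F : SimpleGraph V} {w₁ w₂ : V} (h : F.Reachable w₁ w₂) :
    tgt F w₁ = tgt F w₂ := by
  unfold tgt
  congr 1
  funext t
  apply propext
  constructor
  · rintro ⟨h1, h2⟩; exact ⟨h.symm.trans h1, h2⟩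
  · rintro ⟨h1, h2⟩; exact ⟨h.trans h1, h2⟩

/-- pick predicate for neighbors of `u` -/
def Pu (F : SimpleGraph V) (u v w x : V) : Prop := F.Adj w x ∧
  (F.Reachable u w → ¬(de F w x).Reachable w u) ∧
  (¬F.Reachable u w → F.Reachable v w → ¬(de F w x).Reachable x v) ∧
  (¬F.Reachable u w → ¬F.Reachable v w → ¬(de F w x).Reachable w (tgt F w))

/-- pick predicate for neighbors of `v` -/
def Pv (F : SimpleGraph V) (u v z y : V) : Prop := F.Adj z y ∧
  (F.Reachable v z → ¬(de F z y).Reachable z v) ∧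
  (¬F.Reachable v z → F.Reachable u z → ¬(de F z y).Reachable y u) ∧
  (¬F.Reachable v z → ¬F.Reachable u z → ¬(de F z y).Reachable y (tgt F z))

lemma existsPu {G F : SimpleGraph V} {u v : V} (hA : F.IsAcyclic) (hGuv : ¬ G.Adj u v)
    (hstep : ∀ w, G.Adj u w → ¬F.Reachable u w → (F.neighborSet w).ncard = 2) :
    ∀ w, G.Adj u w → ∃ x, Pu F u v w x := by
  intro w hw
  by_cases h1 : F.Reachable u w
  · obtain ⟨x, hx, hr1, -⟩ := toward hA h1 (Ne.symm hw.ne)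
    exact ⟨x, hx, fun _ => hr1, fun h _ => absurd h1 h, fun h _ => absurd h1 h⟩
  · have hdw : (F.neighborSet w).ncard = 2 := hstep w hw h1
    by_cases h2 : F.Reachable v w
    · have hwv : w ≠ v := fun hh => hGuv (hh ▸ hw)
      obtain ⟨x, hx, hr1, -⟩ := awayfrom hA h2 hwv hdw
      exact ⟨x, hx, fun hc => absurd hc h1, fun _ _ => hr1, fun _ hc => (hc h2).elim⟩
    · have hsp := tgt_spec hA w
      have hwt : w ≠ tgt F w := by
        intro hh
        rw [← hh] at hsp
        omega
      obtain ⟨x, hx, hr1, -⟩ := toward hA hsp.1.symm hwt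
      exact ⟨x, hx, fun hc => absurd hc h1, fun _ hc => absurd hc h2, fun _ _ => hr1⟩

lemma existsPv {G F : SimpleGraph V} {u v : V} (hA : F.IsAcyclic) (hGuv : ¬ G.Adj u v)
    (hstep : ∀ z, G.Adj v z → ¬F.Reachable v z → (F.neighborSet z).ncard = 2) :
    ∀ z, G.Adj v z → ∃ y, Pv F u v z y := by
  intro z hz
  by_cases h1 : F.Reachable v z
  · obtain ⟨y, hy, hr1, -⟩ := toward hA h1 (Ne.symm hz.ne)
    exact ⟨y, hy, fun _ => hr1, fun h _ => absurd h1 h, fun h _ => absurd h1 h⟩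
  · have hdz : (F.neighborSet z).ncard = 2 := hstep z hz h1
    by_cases h2 : F.Reachable u z
    · have hzu : z ≠ u := by
        intro hh
        rw [hh] at hz
        exact hGuv hz.symm
      obtain ⟨y, hy, hr1, -⟩ := awayfrom hA h2 hzu hdz
      exact ⟨y, hy, fun hc => absurd hc h1, fun _ _ => hr1, fun _ hc => (hc h2).elim⟩
    · have hsp := tgt_spec hA z
      have hzt : z ≠ tgt F z := by
        intro hh
        rw [← hh] at hsp
        omega
      obtain ⟨y, hy, hr1, -⟩ := awayfrom hA hsp.1.symm hzt hdz
      exact ⟨y, hy, fun hc => absurd hc h1, fun _ hc => absurd hc h2, fun _ _ => hr1⟩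

lemma mutual_u {F : SimpleGraph V} {u v w₁ w₂ : V} (hA : F.IsAcyclic)
    (h1 : Pu F u v w₁ w₂) (h2 : Pu F u v w₂ w₁) : False := by
  obtain ⟨hadj, h1a, h1b, h1c⟩ := h1
  obtain ⟨-, h2a, h2b, h2c⟩ := h2
  rw [de_comm] at h2a h2b h2c
  have hr12 : F.Reachable w₁ w₂ := hadj.reachable
  have hbr : ¬(de F w₁ w₂).Reachable w₁ w₂ := bridge hA hadj
  by_cases c1 : F.Reachable u w₁
  · have c1' : F.Reachable u w₂ := c1.trans hr12
    rcases split (a := w₁) (b := w₂) (c1.symm : F.Reachable w₁ u) with h | ⟨ha, hb⟩ | ⟨ha, hb⟩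
    · exact h1a c1 h
    · exact h2a c1' hb
    · exact hbr ha
  · by_cases c2 : F.Reachable v w₁
    · have c2' : F.Reachable v w₂ := c2.trans hr12
      have nc1' : ¬F.Reachable u w₂ := fun h => c1 (h.trans hr12.symm)
      rcases split (a := w₁) (b := w₂) (c2 : F.Reachable v w₁) with h | ⟨ha, hb⟩ | ⟨ha, hb⟩
      · exact h2b nc1' c2' h.symm
      · exact hbr hb.symm
      · exact h1b c1 c2 ha.symm
    · have nc1' : ¬F.Reachable u w₂ := fun h => c1 (h.trans hr12.symm)
      have nc2' : ¬F.Reachable v w₂ := fun h => c2 (h.trans hr12.symm)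
      have htg : tgt F w₂ = tgt F w₁ := (tgt_eq hr12).symm
      have h2c' := h2c nc1' nc2'
      rw [htg] at h2c'
      rcases split (a := w₁) (b := w₂) ((tgt_spec hA w₁).1 : F.Reachable w₁ (tgt F w₁)) with
        h | ⟨ha, hb⟩ | ⟨ha, hb⟩
      · exact h1c c1 c2 h
      · exact h2c' hb
      · exact hbr ha


lemma mutual_v {F : SimpleGraph V} {u v z₁ z₂ : V} (hA : F.IsAcyclic)
    (h1 : Pv F u v z₁ z₂) (h2 : Pv F u v z₂ z₁) : False := by
  obtain ⟨hadj, h1a, h1b, h1c⟩ := h1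
  obtain ⟨-, h2a, h2b, h2c⟩ := h2
  rw [de_comm] at h2a h2b h2c
  have hr12 : F.Reachable z₁ z₂ := hadj.reachable
  have hbr : ¬(de F z₁ z₂).Reachable z₁ z₂ := bridge hA hadj
  by_cases c1 : F.Reachable v z₁
  · have c1' : F.Reachable v z₂ := c1.trans hr12
    rcases split (a := z₁) (b := z₂) (c1 : F.Reachable v z₁) with h | ⟨ha, hb⟩ | ⟨ha, hb⟩
    · exact h1a c1 h.symm
    · exact h1a c1 ha.symm
    · exact h2a c1' ha.symm
  · have nc1' : ¬F.Reachable v z₂ := fun h => c1 (h.trans hr12.symm)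
    by_cases c2 : F.Reachable u z₁
    · have c2' : F.Reachable u z₂ := c2.trans hr12
      rcases split (a := z₁) (b := z₂) (c2 : F.Reachable u z₁) with h | ⟨ha, hb⟩ | ⟨ha, hb⟩
      · exact h2b nc1' c2' h.symm
      · exact hbr hb.symm
      · exact h1b c1 c2 ha.symm
    · have nc2' : ¬F.Reachable u z₂ := fun h => c2 (h.trans hr12.symm)
      have htg : tgt F z₂ = tgt F z₁ := (tgt_eq hr12).symm
      have h2c' := h2c nc1' nc2'
      rw [htg] at h2c'
      rcases split (a := z₁) (b := z₂) ((tgt_spec hA z₁).1 : F.Reachable z₁ (tgt F z₁)) with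
        h | ⟨ha, hb⟩ | ⟨ha, hb⟩
      · exact h2c' h
      · exact h1c c1 c2 hb
      · exact hbr ha

lemma cross_eq {F : SimpleGraph V} {u v w x : V} (hA : F.IsAcyclic)
    (hnr : ¬F.Reachable u v) (h1 : Pu F u v w x) (h2 : Pv F u v w x) : False := by
  obtain ⟨hadj, h1a, h1b, h1c⟩ := h1
  obtain ⟨-, h2a, h2b, h2c⟩ := h2
  have hbr : ¬(de F w x).Reachable w x := bridge hA hadj
  by_cases c1 : F.Reachable u w
  · have ncv : ¬F.Reachable v w := fun h => hnr (c1.trans h.symm)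
    rcases split (a := w) (b := x) (c1 : F.Reachable u w) with h | ⟨ha, hb⟩ | ⟨ha, hb⟩
    · exact h1a c1 h.symm
    · exact h1a c1 ha.symm
    · exact h2b ncv c1 ha.symm
  · by_cases c2 : F.Reachable v w
    · rcases split (a := w) (b := x) (c2 : F.Reachable v w) with h | ⟨ha, hb⟩ | ⟨ha, hb⟩
      · exact h2a c2 h.symm
      · exact h2a c2 ha.symm
      · exact h1b c1 c2 ha.symm
    · rcases split (a := w) (b := x) ((tgt_spec hA w).1 : F.Reachable w (tgt F w)) with
        h | ⟨ha, hb⟩ | ⟨ha, hb⟩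
      · exact h1c c1 c2 h
      · exact h2c c2 c1 hb
      · exact hbr ha


lemma ae_split {F : SimpleGraph V} {a b p q : V} (h : (ae F a b).Reachable p q) :
    F.Reachable p q ∨ (F.Reachable p a ∧ F.Reachable b q) ∨
      (F.Reachable p b ∧ F.Reachable a q) := by
  rcases split (a := a) (b := b) h with h0 | ⟨ha, hb⟩ | ⟨ha, hb⟩
  · exact Or.inl (h0.mono de_ae_le)
  · exact Or.inr (Or.inl ⟨ha.mono de_ae_le, hb.mono de_ae_le⟩)
  · exact Or.inr (Or.inr ⟨ha.mono de_ae_le, hb.mono de_ae_le⟩)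

/-- the crossing move: if `u ~ w`, `v ~ z` in `G`, `wz ∈ F` and the pick of `w` is `z`,
we can build a bigger linear forest -/
lemma crossing {G F : SimpleGraph V} {u v w z : V} (hFG : F ≤ G) (hA : F.IsAcyclic)
    (hd2 : ∀ t, (F.neighborSet t).ncard ≤ 2)
    (hdu : (F.neighborSet u).ncard ≤ 1) (hdv : (F.neighborSet v).ncard ≤ 1)
    (hnr : ¬F.Reachable u v) (huv : u ≠ v) (hGuv : ¬ G.Adj u v)
    (hw : G.Adj u w) (hz : G.Adj v z) (hwz : F.Adj w z) (hPu : Pu F u v w z) :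
    containsLinearForest G (F.edgeSet.ncard + 1) := by
  have hzu : z ≠ u := by
    intro hh; rw [hh] at hz; exact hGuv hz.symm
  have hwv : w ≠ v := fun hh => hGuv (hh ▸ hw)
  have hA' : (de F w z).IsAcyclic := acyclic_anti de_le hA
  have hF'G : de F w z ≤ G := le_trans de_le hFG
  have hd2' : ∀ t, ((de F w z).neighborSet t).ncard ≤ 2 := fun t => le_trans (de_deg_le t) (hd2 t)
  have hcnt : (de F w z).edgeSet.ncard + 1 = F.edgeSet.ncard := de_edge_count hwz
  have hdw' : ((de F w z).neighborSet w).ncard ≤ 1 := by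
    have h1 := de_deg_add_one hwz
    have h2 := hd2 w
    omega
  have hdz' : ((de F w z).neighborSet z).ncard ≤ 1 := by
    have h1 : ((de F z w).neighborSet z).ncard + 1 = (F.neighborSet z).ncard :=
      de_deg_add_one hwz.symm
    rw [de_comm (a := z) (b := w)] at h1
    have h2 := hd2 z
    omega
  have hdu' : ((de F w z).neighborSet u).ncard ≤ 1 := le_trans (de_deg_le u) hdu
  -- the two key reachability facts
  have hkey : ¬(de F w z).Reachable u w ∧ ¬(ae (de F w z) u w).Reachable v z := by
    by_cases c1 : F.Reachable u w
    · constructor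
      · exact fun h => (hPu.2.1 c1) h.symm
      · intro h
        rcases ae_split h with h0 | ⟨ha, hb⟩ | ⟨ha, hb⟩
        · exact hnr ((c1.trans hwz.reachable).trans (h0.mono de_le).symm)
        · exact hnr (ha.mono de_le).symm
        · exact hnr (c1.trans (ha.mono de_le).symm)
    · by_cases c2 : F.Reachable v w
      · constructor
        · exact fun h => c1 (h.mono de_le)
        · intro h
          rcases ae_split h with h0 | ⟨ha, hb⟩ | ⟨ha, hb⟩
          · exact (hPu.2.2.1 c1 c2) h0.symm
          · exact hnr (ha.mono de_le).symm
          · exact hnr ((hb.mono de_le).trans ((c2.trans hwz.reachable)).symm)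
      · constructor
        · exact fun h => c1 (h.mono de_le)
        · intro h
          rcases ae_split h with h0 | ⟨ha, hb⟩ | ⟨ha, hb⟩
          · exact c2 ((h0.mono de_le).trans hwz.reachable.symm)
          · exact hnr (ha.mono de_le).symm
          · exact c2 (ha.mono de_le)
  obtain ⟨hMle, hMac, hMd2, hMes, hMnot⟩ := addEdge hF'G hA' hd2' hw hkey.1 hdu' hdw'
  have hMcnt : (ae (de F w z) u w).edgeSet.ncard = F.edgeSet.ncard := by
    rw [hMes, Set.ncard_insert_of_notMem hMnot (Set.toFinite _)]
    omega
  have hMv : ((ae (de F w z) u w).neighborSet v).ncard ≤ 1 := by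
    rw [ae_nbr_other huv.symm hwv.symm]
    exact le_trans (de_deg_le v) hdv
  have hMz : ((ae (de F w z) u w).neighborSet z).ncard ≤ 1 := by
    rw [ae_nbr_other hzu (hwz.ne).symm]
    exact hdz'
  obtain ⟨h2le, h2ac, h2d2, h2es, h2not⟩ := addEdge hMle hMac hMd2 hz hkey.2 hMv hMz
  exact ⟨ae (ae (de F w z) u w) v z, h2le, h2ac, h2d2, by
    rw [h2es, Set.ncard_insert_of_notMem h2not (Set.toFinite _), hMcnt]⟩


/-- Core lemma: a linear forest `F` with `u, v` of degree ≤ 1 in different components,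
and `d_G(u) + d_G(v) > |E(F)|`, can be extended inside `G`. -/
lemma key {G F : SimpleGraph V} {u v : V} (hFG : F ≤ G) (hA : F.IsAcyclic)
    (hd2 : ∀ t, (F.neighborSet t).ncard ≤ 2)
    (hdu : (F.neighborSet u).ncard ≤ 1) (hdv : (F.neighborSet v).ncard ≤ 1)
    (hnr : ¬F.Reachable u v) (huv : u ≠ v) (hGuv : ¬ G.Adj u v)
    (hdeg : F.edgeSet.ncard + 1 ≤ (G.neighborSet u).ncard + (G.neighborSet v).ncard) :
    containsLinearForest G (F.edgeSet.ncard + 1) := by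
  by_contra hcon
  have win : ∀ a b : V, G.Adj a b → ¬F.Reachable a b →
      (F.neighborSet a).ncard ≤ 1 → (F.neighborSet b).ncard ≤ 1 → False := by
    intro a b hab hnr' ha hb
    obtain ⟨h1, h2, h3, h4, h5⟩ := addEdge hFG hA hd2 hab hnr' ha hb
    exact hcon ⟨ae F a b, h1, h2, h3, by
      rw [h4, Set.ncard_insert_of_notMem h5 (Set.toFinite _)]⟩
  have stepu : ∀ w, G.Adj u w → ¬F.Reachable u w → (F.neighborSet w).ncard = 2 := by
    intro w hw hnr'
    by_contra hne
    have hle : (F.neighborSet w).ncard ≤ 1 := by have := hd2 w; omega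
    exact win u w hw hnr' hdu hle
  have stepv : ∀ z, G.Adj v z → ¬F.Reachable v z → (F.neighborSet z).ncard = 2 := by
    intro z hz hnr'
    by_contra hne
    have hle : (F.neighborSet z).ncard ≤ 1 := by have := hd2 z; omega
    exact win v z hz hnr' hdv hle
  choose xu hxu using existsPu (G := G) (v := v) hA hGuv stepu
  choose yv hyv using existsPv (G := G) (u := u) hA hGuv stepv
  -- the two injections into the edge set of F
  have hfu : Function.Injective (fun w : ↥(G.neighborSet u) =>
      (⟨s(w.1, xu w.1 w.2), (F.mem_edgeSet).mpr (hxu w.1 w.2).1⟩ : ↥F.edgeSet)) := by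
    rintro ⟨w₁, h₁⟩ ⟨w₂, h₂⟩ heq
    simp only [Subtype.mk.injEq] at heq
    rcases Sym2.eq_iff.mp heq with ⟨rfl, -⟩ | ⟨he1, he2⟩
    · rfl
    · exfalso
      have p1 := hxu w₁ h₁
      have p2 := hxu w₂ h₂
      rw [he2] at p1
      rw [← he1] at p2
      exact mutual_u hA p1 p2
  have hgv : Function.Injective (fun z : ↥(G.neighborSet v) =>
      (⟨s(z.1, yv z.1 z.2), (F.mem_edgeSet).mpr (hyv z.1 z.2).1⟩ : ↥F.edgeSet)) := by
    rintro ⟨z₁, h₁⟩ ⟨z₂, h₂⟩ heq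
    simp only [Subtype.mk.injEq] at heq
    rcases Sym2.eq_iff.mp heq with ⟨rfl, -⟩ | ⟨he1, he2⟩
    · rfl
    · exfalso
      have p1 := hyv z₁ h₁
      have p2 := hyv z₂ h₂
      rw [he2] at p1
      rw [← he1] at p2
      exact mutual_v hA p1 p2
  have hdisj : ∀ (a : ↥(G.neighborSet u)) (b : ↥(G.neighborSet v)),
      (⟨s(a.1, xu a.1 a.2), (F.mem_edgeSet).mpr (hxu a.1 a.2).1⟩ : ↥F.edgeSet) ≠
      (⟨s(b.1, yv b.1 b.2), (F.mem_edgeSet).mpr (hyv b.1 b.2).1⟩ : ↥F.edgeSet) := by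
    rintro ⟨w, hw⟩ ⟨z, hz⟩ heq
    simp only [Subtype.mk.injEq] at heq
    rcases Sym2.eq_iff.mp heq with ⟨he1, he2⟩ | ⟨he1, he2⟩
    · -- w = z and same pick : impossible
      subst he1
      have p1 := hxu w hw
      have p2 := hyv w hz
      rw [he2] at p1
      exact cross_eq hA hnr p1 p2
    · -- w = yv z, xu w = z : crossing move
      have p1 := hxu w hw
      rw [he2] at p1
      exact hcon (crossing hFG hA hd2 hdu hdv hnr huv hGuv hw hz p1.1 p1)
  -- counting
  have hsum : Function.Injective
      (Sum.elim
        (fun w : ↥(G.neighborSet u) =>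
          (⟨s(w.1, xu w.1 w.2), (F.mem_edgeSet).mpr (hxu w.1 w.2).1⟩ : ↥F.edgeSet))
        (fun z : ↥(G.neighborSet v) =>
          (⟨s(z.1, yv z.1 z.2), (F.mem_edgeSet).mpr (hyv z.1 z.2).1⟩ : ↥F.edgeSet))) :=
    hfu.sumElim hgv hdisj
  have hcard := Nat.card_le_card_of_injective _ hsum
  rw [Nat.card_sum, Nat.card_coe_set_eq, Nat.card_coe_set_eq,
    Nat.card_coe_set_eq] at hcard
  omega

end LF

/-- Stability: if `u, v` are nonadjacent with `d(u) + d(v) ≥ k`, then `G` has no linear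
forest with `k` edges iff `G + uv` has none. -/
theorem stmt3 {n k : ℕ} (G : SimpleGraph (Fin n)) (u v : Fin n) (huv : u ≠ v)
    (hadj : ¬ G.Adj u v)
    (hdeg : k ≤ (G.neighborSet u).ncard + (G.neighborSet v).ncard) :
    ¬ containsLinearForest G k ↔
      ¬ containsLinearForest (G ⊔ SimpleGraph.fromEdgeSet {s(u, v)}) k := by
  rw [not_iff_not]
  constructor
  · rintro ⟨H, h1, h2, h3, h4⟩
    exact ⟨H, le_trans h1 le_sup_left, h2, h3, h4⟩
  · rintro ⟨H, h1, h2, h3, h4⟩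
    by_cases he : s(u,v) ∈ H.edgeSet
    · -- H uses the edge uv
      have hHuv : H.Adj u v := (H.mem_edgeSet).mp he
      have hF_le_G : LF.de H u v ≤ G := by
        intro x y hxy
        obtain ⟨hH, hne⟩ := LF.de_adj.mp hxy
        rcases (sup_adj _ _ _ _).mp (h1 hH) with h | h
        · exact h
        · exact absurd ((fromEdgeSet_adj _).mp h).1 hne
      have hA : (LF.de H u v).IsAcyclic := LF.acyclic_anti LF.de_le h2
      have hd2' : ∀ t, ((LF.de H u v).neighborSet t).ncard ≤ 2 :=
        fun t => le_trans (LF.de_deg_le t) (h3 t)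
      have hdu : ((LF.de H u v).neighborSet u).ncard ≤ 1 := by
        have ha := LF.de_deg_add_one hHuv
        have hb := h3 u
        omega
      have hdv : ((LF.de H u v).neighborSet v).ncard ≤ 1 := by
        have ha : ((LF.de H v u).neighborSet v).ncard + 1 = (H.neighborSet v).ncard :=
          LF.de_deg_add_one hHuv.symm
        rw [LF.de_comm (a := v) (b := u)] at ha
        have hb := h3 v
        omega
      have hnr : ¬(LF.de H u v).Reachable u v := LF.bridge h2 hHuv
      have hcount : (LF.de H u v).edgeSet.ncard + 1 = k := by
        rw [LF.de_edge_count hHuv, h4]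
      have hdeg' : (LF.de H u v).edgeSet.ncard + 1 ≤
          (G.neighborSet u).ncard + (G.neighborSet v).ncard := by omega
      have hmain := LF.key hF_le_G hA hd2' hdu hdv hnr huv hadj hdeg'
      rwa [hcount] at hmain
    · -- H avoids uv, so H ≤ G
      refine ⟨H, ?_, h2, h3, h4⟩
      intro x y hxy
      rcases (sup_adj _ _ _ _).mp (h1 hxy) with h | h
      · exact h
      · exfalso
        have hx : s(x,y) ∈ H.edgeSet := (H.mem_edgeSet).mpr hxy
        rw [((fromEdgeSet_adj _).mp h).1] at hx
        exact he hx
end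

section
/- Let G be a shifted graph on vertex set {1,...,n} whose largest linear forest has exactly k−1 edges. Then there exists an integer m with ⌈(k+1)/2⌉ ≤ m ≤ k such that G is a subgraph of H(n,k,m), where H(n,k,m) is the graph on {1,...,n} whose edges are all pairs within A = {1,...,m} together with all pairs between C = {1,...,k−m} and B = {m+1,...,n}. -/
/-!
If `G` lies in no `H(n,k,m)`, then for each admissible `m` it has an edge `ab` with
`a ≥ k - m` and `b ≥ m`. A shifted graph is closed under lowering either endpoint of an edge, so
choosing `m = k - x` shows that `G` contains every pair `{x, y}` with `x + y ≤ k`. These pairs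
carry the zigzag path `k, 0, k - 1, 1, k - 2, …` through `{0, …, k}`, a linear forest with
`k` edges.
-/

open SimpleGraph Finset

/-- `G` is a shifted graph: it is invariant under all shifting operations. -/
def IsShifted {n : ℕ} (G : SimpleGraph (Fin n)) : Prop :=
  ∀ i j : Fin n, i < j → shiftGraph G i j = G

/-- The graph `H(n,k,m)` on vertex set `Fin n`: all pairs within `A = {0,…,m-1}` together
with all pairs between `C = {0,…,k-m-1}` and `B = {m,…,n-1}`. -/
def Hgraph (n k m : ℕ) : SimpleGraph (Fin n) where
  Adj a b := a ≠ b ∧ (((a : ℕ) < m ∧ (b : ℕ) < m) ∨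
    ((a : ℕ) < k - m ∧ m ≤ (b : ℕ)) ∨ ((b : ℕ) < k - m ∧ m ≤ (a : ℕ)))
  symm := by refine ⟨?_⟩; rintro a b ⟨h1, h2⟩; exact ⟨h1.symm, by tauto⟩
  loopless := by refine ⟨?_⟩; rintro a ⟨h1, -⟩; exact h1 rfl

namespace SimpleGraph.Walk.IsPath

variable {V : Type*} {G : SimpleGraph V} {u v : V} {p : G.Walk u v}

theorem isAcyclic_spanningCoe_toSubgraph (hp : p.IsPath) :
    p.toSubgraph.spanningCoe.IsAcyclic := by
  induction p with
  | nil => exact IsAcyclic.anti (fun _ _ h => by simp at h) isAcyclic_bot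
  | @cons a b _ h q ih =>
    rw [Walk.cons_isPath_iff] at hp
    have hsplit : (Walk.cons h q).toSubgraph.spanningCoe =
        q.toSubgraph.spanningCoe ⊔ edge a b := by
      rw [Walk.toSubgraph, sup_comm]
      show q.toSubgraph.spanningCoe ⊔ (G.subgraphOfAdj h).spanningCoe = _
      rw [Subgraph.spanningCoe_subgraphOfAdj]
      rfl
    rw [hsplit]
    refine (ih hp.1).sup_edge_of_not_reachable fun ⟨r⟩ => ?_
    have hnil : ¬ r.Nil := Walk.not_nil_of_ne h.ne
    exact hp.2 (q.mem_verts_toSubgraph.mp (q.toSubgraph.edge_vert (r.adj_snd hnil)))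

theorem ncard_neighborSet_toSubgraph_le_two (hp : p.IsPath) (w : V) :
    (p.toSubgraph.neighborSet w).ncard ≤ 2 := by
  by_cases hw : w ∈ p.support
  · obtain ⟨i, rfl, hi⟩ := p.mem_support_iff_exists_getVert.mp hw
    by_cases hnil : p.Nil
    · have hempty : p.toSubgraph.neighborSet (p.getVert i) = ∅ := by
        ext z
        simp [Walk.toSubgraph_adj_iff, hnil.length_eq_zero]
      simp [hempty]
    obtain rfl | hi0 := Nat.eq_zero_or_pos i
    · simp [hp.neighborSet_toSubgraph_startpoint hnil]
    obtain hlt | rfl := hi.lt_or_eq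
    · exact (hp.ncard_neighborSet_toSubgraph_internal_eq_two hi0.ne' hlt).le
    · simp [hp.neighborSet_toSubgraph_endpoint hnil]
  · have hempty : p.toSubgraph.neighborSet w = ∅ :=
      Set.eq_empty_of_forall_notMem fun z hz =>
        hw (p.mem_verts_toSubgraph.mp (p.toSubgraph.edge_vert hz))
    simp [hempty]

theorem containsLinearForest (hp : p.IsPath) : containsLinearForest G p.length := by
  refine ⟨p.toSubgraph.spanningCoe, p.toSubgraph.spanningCoe_le,
    hp.isAcyclic_spanningCoe_toSubgraph, hp.ncard_neighborSet_toSubgraph_le_two, ?_⟩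
  classical
  rw [Subgraph.edgeSet_spanningCoe, Walk.edgeSet_toSubgraph, ← Walk.length_edges,
    ← List.toFinset_card_of_nodup hp.isTrail.edges_nodup, ← Set.ncard_coe_finset]
  simp [Walk.edgeSet]

end SimpleGraph.Walk.IsPath

theorem containsLinearForest_zero {V : Type*} (G : SimpleGraph V) : containsLinearForest G 0 :=
  ⟨⊥, bot_le, isAcyclic_bot, by simp, by simp⟩

theorem exists_isPath_length_of_forall_adj_of_add_le {n k : ℕ} (hkn : k < n)
    {G : SimpleGraph (Fin n)} (hG : ∀ x y : Fin n, x ≠ y → (x : ℕ) + y ≤ k → G.Adj x y) :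
    ∃ (u v : Fin n) (p : G.Walk u v), p.IsPath ∧ p.length = k := by
  -- the zigzag `k, 0, k - 1, 1, k - 2, …`: consecutive entries sum to `k` or `k - 1`
  let zigzag : Fin (k + 1) → Fin n := fun i =>
    ⟨if (i : ℕ) % 2 = 0 then k - i / 2 else i / 2, by split_ifs <;> omega⟩
  have hzigzag : Function.Injective zigzag := fun i j hij => by
    have := congrArg Fin.val hij
    simp only [zigzag] at this
    ext
    split_ifs at this <;> omega
  have hchain : (List.ofFn zigzag).IsChain G.Adj := by
    refine List.isChain_ofFn.mpr fun i hi => hG _ _ (hzigzag.ne (by simp)) ?_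
    simp only [zigzag]
    split_ifs <;> omega
  refine ⟨_, _, Walk.ofSupport _ (by simp) hchain, ?_, ?_⟩
  · rw [Walk.isPath_def, Walk.support_ofSupport]
    exact List.nodup_ofFn_ofInjective hzigzag
  · simp [Walk.length_ofSupport]

namespace IsShifted

variable {n : ℕ} {G : SimpleGraph (Fin n)}

theorem adj_of_lt (hsh : IsShifted G) {a b c : Fin n} (hab : G.Adj a b) (hcb : c < b)
    (hca : c ≠ a) : G.Adj a c := by
  classical
  by_contra hac
  have hmap : Sym2.map (fun x => if x = b then c else x) s(a, b) = s(a, c) := by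
    simp [hab.ne]
  have hshift : shiftEdge G c b s(a, b) = s(a, c) := by
    rw [shiftEdge, if_pos ⟨by simp, by simp [hca, hcb.ne], hmap ▸ hac⟩, hmap]
  have hadj : (shiftGraph G c b).Adj a c :=
    (fromEdgeSet_adj _).mpr ⟨⟨s(a, b), hab, hshift⟩, hca.symm⟩
  exact hac (hsh c b hcb ▸ hadj)

theorem adj_of_le (hsh : IsShifted G) {a b x y : Fin n} (hab : G.Adj a b) (hxa : x ≤ a)
    (hyb : y ≤ b) (hxy : x ≠ y) : G.Adj x y := by
  obtain rfl | hya := eq_or_ne y a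
  · exact (hsh.adj_of_lt hab ((hxa.lt_of_ne hxy).trans_le hyb) hxy).symm
  have hay : G.Adj a y := hyb.eq_or_lt.elim (fun h => h ▸ hab) (hsh.adj_of_lt hab · hya)
  exact hxa.eq_or_lt.elim (fun h => h ▸ hay) fun hlt => (hsh.adj_of_lt hay.symm hlt hxy).symm

end IsShifted

theorem exists_adj_of_not_le_Hgraph {n k m : ℕ} {G : SimpleGraph (Fin n)}
    (h : ¬ G ≤ Hgraph n k m) :
    ∃ a b : Fin n, G.Adj a b ∧ (a : ℕ) < b ∧ k - m ≤ a ∧ m ≤ b := by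
  obtain ⟨a, b, hab, hH⟩ : ∃ a b, G.Adj a b ∧ ¬ (Hgraph n k m).Adj a b := by
    by_contra! hall
    exact h hall
  simp only [Hgraph, ne_eq, hab.ne, not_false_eq_true, true_and] at hH
  obtain hlt | hlt := Nat.lt_or_gt_of_ne (Fin.val_ne_of_ne hab.ne)
  · exact ⟨a, b, hab, hlt, by omega, by omega⟩
  · exact ⟨b, a, hab.symm, hlt, by omega, by omega⟩

theorem IsShifted.adj_of_add_le {n k : ℕ} {G : SimpleGraph (Fin n)} (hsh : IsShifted G)
    (hH : ∀ m, (k + 2) / 2 ≤ m → m ≤ k → ¬ G ≤ Hgraph n k m) {x y : Fin n} (hxy : x ≠ y)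
    (hsum : (x : ℕ) + y ≤ k) : G.Adj x y := by
  wlog hlt : (x : ℕ) < y generalizing x y
  · exact (this hxy.symm (by omega) (by omega)).symm
  obtain ⟨a, b, hab, -, ha, hb⟩ := exists_adj_of_not_le_Hgraph (hH (k - x) (by omega) (by omega))
  exact hsh.adj_of_le hab (by show (x : ℕ) ≤ a; omega) (by show (y : ℕ) ≤ b; omega) hxy

theorem stmt4_general {n k : ℕ} (G : SimpleGraph (Fin n)) (hsh : IsShifted G)
    (h2 : ¬ containsLinearForest G k) :
    ∃ m : ℕ, (k + 2) / 2 ≤ m ∧ m ≤ k ∧ G ≤ Hgraph n k m := by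
  by_contra! hH
  obtain rfl | hk := Nat.eq_zero_or_pos k
  · exact h2 (containsLinearForest_zero G)
  obtain ⟨a, b, -, -, -, hb⟩ := exists_adj_of_not_le_Hgraph (hH k (by omega) le_rfl)
  obtain ⟨_, _, p, hp, hlen⟩ := exists_isPath_length_of_forall_adj_of_add_le
    (hb.trans_lt b.isLt) fun x y hxy hsum => hsh.adj_of_add_le hH hxy hsum
  exact h2 (hlen ▸ hp.containsLinearForest)

/-- A shifted graph whose largest linear forest has exactly `k-1` edges is a subgraph of
`H(n,k,m)` for some `⌈(k+1)/2⌉ ≤ m ≤ k`.  (Note `⌈(k+1)/2⌉ = (k+2)/2` in `ℕ`.) -/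
theorem stmt4 {n k : ℕ} (G : SimpleGraph (Fin n)) (hsh : IsShifted G)
    (h1 : containsLinearForest G (k - 1)) (h2 : ¬ containsLinearForest G k) :
    ∃ m : ℕ, (k + 2) / 2 ≤ m ∧ m ≤ k ∧ G ≤ Hgraph n k m :=
  stmt4_general G hsh h2
end

section
/- For odd k and n ≥ (k+1)/2, the join of K_{(k−1)/2} with an independent set of n − (k−1)/2 vertices contains no linear forest with k edges, and the number of its s-cliques equals C((k+1)/2, s) + (n − (k+1)/2)·C((k−1)/2, s−1). -/
open SimpleGraph Finset

/-- The join `K_a ∨ E_{n-a}`, realized on `Fin n` with the clique on the first `a` vertices. -/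
def joinGraph (n a : ℕ) : SimpleGraph (Fin n) where
  Adj x y := x ≠ y ∧ ((x : ℕ) < a ∨ (y : ℕ) < a)
  symm := ⟨by rintro x y ⟨h1, h2⟩; exact ⟨h1.symm, by tauto⟩⟩
  loopless := ⟨by rintro x ⟨h1, -⟩; exact h1 rfl⟩

namespace Finset

variable {α : Type*} [DecidableEq α]

lemma insert_sdiff_of_notMem_of_subset {A T : Finset α} {b : α} (hb : b ∉ A) (hT : T ⊆ A) :
    insert b T \ A = {b} := by
  rw [insert_sdiff_of_notMem _ hb, sdiff_eq_empty_iff_subset.2 hT, insert_empty]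

lemma insert_inter_of_notMem_of_subset {A T : Finset α} {b : α} (hb : b ∉ A) (hT : T ⊆ A) :
    insert b T ∩ A = T := by
  rw [insert_inter_of_notMem hb, inter_eq_left.2 hT]

variable [Fintype α]

lemma card_filter_card_sdiff_eq_one (A : Finset α) (t : ℕ) :
    #{S : Finset α | #S = t + 1 ∧ #(S \ A) = 1} = #Aᶜ * (#A).choose t := by
  rw [← card_powersetCard, ← card_product]
  symm
  refine card_nbij (fun p => insert p.1 p.2) ?_ ?_ ?_
  · rintro ⟨b, T⟩ hp
    simp only [coe_product, Set.mem_prod, mem_coe, mem_compl, mem_powersetCard] at hp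
    obtain ⟨hb, hTA, hT⟩ := hp
    simp only [coe_filter, mem_univ, true_and, Set.mem_ofPred_eq,
      insert_sdiff_of_notMem_of_subset hb hTA, card_singleton, and_true]
    rw [card_insert_of_notMem (fun h => hb (hTA h)), hT]
  · rintro ⟨b, T⟩ hp ⟨b', T'⟩ hp' h
    simp only [coe_product, Set.mem_prod, mem_coe, mem_compl, mem_powersetCard] at hp hp'
    have hsdiff := congrArg (· \ A) h
    have hinter := congrArg (· ∩ A) h
    simp only [insert_sdiff_of_notMem_of_subset hp.1 hp.2.1,
      insert_sdiff_of_notMem_of_subset hp'.1 hp'.2.1, insert_inter_of_notMem_of_subset hp.1 hp.2.1,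
      insert_inter_of_notMem_of_subset hp'.1 hp'.2.1, singleton_inj] at hsdiff hinter
    rw [hsdiff, hinter]
  · intro S hS
    simp only [coe_filter, mem_univ, true_and, Set.mem_ofPred_eq] at hS
    obtain ⟨hS, hSA⟩ := hS
    obtain ⟨b, hb⟩ := card_eq_one.1 hSA
    have hbA : b ∉ A := (mem_sdiff.1 (hb ▸ mem_singleton_self b)).2
    refine ⟨(b, S ∩ A), ?_, ?_⟩
    · have := card_sdiff_add_card_inter S A
      simp only [coe_product, Set.mem_prod, mem_coe, mem_compl, mem_powersetCard]
      exact ⟨hbA, inter_subset_right, by omega⟩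
    · simp only
      rw [insert_eq, ← hb, sdiff_union_inter]

theorem card_filter_card_sdiff_le_one (A : Finset α) (t : ℕ) :
    #{S : Finset α | #S = t + 1 ∧ #(S \ A) ≤ 1} =
      (#A).choose (t + 1) + #Aᶜ * (#A).choose t := by
  have hsplit : ({S : Finset α | #S = t + 1 ∧ #(S \ A) ≤ 1} : Finset _) =
      A.powersetCard (t + 1) ∪ ({S : Finset α | #S = t + 1 ∧ #(S \ A) = 1} : Finset _) := by
    ext S
    simp only [mem_filter, mem_univ, true_and, mem_union, mem_powersetCard,
      ← sdiff_eq_empty_iff_subset, ← card_eq_zero]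
    omega
  rw [hsplit, card_union_of_disjoint, card_powersetCard, card_filter_card_sdiff_eq_one]
  refine disjoint_left.2 fun S hS hS' => ?_
  simp only [mem_filter, mem_powersetCard, ← sdiff_eq_empty_iff_subset] at hS hS'
  simp [hS.1] at hS'

end Finset

namespace SimpleGraph

variable {V : Type*} [Fintype V] [DecidableEq V] {G : SimpleGraph V} [DecidableRel G.Adj]

theorem IsVertexCover.card_edgeFinset_le_sum_degree {c : Finset V} (hc : G.IsVertexCover c) :
    #G.edgeFinset ≤ ∑ v ∈ c, G.degree v := by
  have hsub : G.edgeFinset ⊆ c.biUnion fun v => G.incidenceFinset v := by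
    intro e he
    induction e using Sym2.ind with
    | _ x y =>
      rw [mem_edgeFinset, mem_edgeSet] at he
      rcases hc he with hx | hy
      · exact mem_biUnion.2 ⟨x, hx, (mem_incidenceFinset _ _ _).2 ⟨he, Sym2.mem_mk_left x y⟩⟩
      · exact mem_biUnion.2 ⟨y, hy, (mem_incidenceFinset _ _ _).2 ⟨he, Sym2.mem_mk_right x y⟩⟩
  calc #G.edgeFinset ≤ #(c.biUnion fun v => G.incidenceFinset v) := card_le_card hsub
    _ ≤ ∑ v ∈ c, #(G.incidenceFinset v) := card_biUnion_le
    _ = ∑ v ∈ c, G.degree v := by simp only [card_incidenceFinset_eq_degree]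

end SimpleGraph

lemma isVertexCover_joinGraph (n m : ℕ) :
    (joinGraph n m).IsVertexCover {v | (v : ℕ) < m} :=
  fun _ _ h => h.2

lemma card_edgeSet_le_of_le_joinGraph {n m : ℕ} {H : SimpleGraph (Fin n)}
    (hH : H ≤ joinGraph n m) (hdeg : ∀ v, (H.neighborSet v).ncard ≤ 2) :
    H.edgeSet.ncard ≤ 2 * m := by
  classical
  set A : Finset (Fin n) := {v | (v : ℕ) < m}
  have hcover : H.IsVertexCover A := by
    simpa [A] using (isVertexCover_joinGraph n m).mono hH
  have hdeg' (v : Fin n) : H.degree v ≤ 2 := by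
    rw [← card_neighborSet_eq_degree, ← Nat.card_eq_fintype_card, Nat.card_coe_set_eq]
    exact hdeg v
  calc H.edgeSet.ncard = #H.edgeFinset := Set.ncard_eq_toFinset_card' _
    _ ≤ ∑ v ∈ A, H.degree v := hcover.card_edgeFinset_le_sum_degree
    _ ≤ ∑ _v ∈ A, 2 := sum_le_sum fun v _ => hdeg' v
    _ ≤ 2 * m := by
      rw [sum_const, Fin.card_filter_val_lt, smul_eq_mul, mul_comm]
      exact Nat.mul_le_mul_left 2 (min_le_right n m)

theorem not_containsLinearForest_joinGraph {n m k : ℕ} (hk : 2 * m < k) :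
    ¬ containsLinearForest (joinGraph n m) k := by
  rintro ⟨H, hH, -, hdeg, rfl⟩
  exact (card_edgeSet_le_of_le_joinGraph hH hdeg).not_gt hk

lemma isClique_joinGraph_iff {n m : ℕ} {S : Finset (Fin n)} :
    (joinGraph n m).IsClique (S : Set (Fin n)) ↔
      #(S \ ({v | (v : ℕ) < m} : Finset (Fin n))) ≤ 1 := by
  simp only [card_le_one, mem_sdiff, mem_filter, mem_univ, true_and, and_imp]
  constructor
  · intro h x hx hxm y hy hym
    by_contra hxy
    exact (h hx hy hxy).2.elim hxm hym
  · intro h x hx y hy hxy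
    refine ⟨hxy, ?_⟩
    by_contra! hm
    exact hxy (h x hx (not_lt.2 hm.1) y hy (not_lt.2 hm.2))

lemma cliqueCount_joinGraph_succ {n m : ℕ} (hm : m ≤ n) (t : ℕ) :
    cliqueCount (joinGraph n m) (t + 1) = m.choose (t + 1) + (n - m) * m.choose t := by
  classical
  set A : Finset (Fin n) := {v | (v : ℕ) < m}
  have hA : #A = m := by
    rw [Fin.card_filter_val_lt, min_eq_right hm]
  have hB : #Aᶜ = n - m := by
    rw [card_compl, Fintype.card_fin, hA]
  calc cliqueCount (joinGraph n m) (t + 1)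
      = #{S : Finset (Fin n) | #S = t + 1 ∧ #(S \ A) ≤ 1} := by
        rw [cliqueCount, ← Set.ncard_coe_finset]
        congr 1
        ext S
        simp [isNClique_iff, isClique_joinGraph_iff, and_comm, A]
    _ = m.choose (t + 1) + (n - m) * m.choose t := by
        rw [card_filter_card_sdiff_le_one, hA, hB]

/-- For odd `k` and `n ≥ (k+1)/2`, the join `K_{(k-1)/2} ∨ E_{n-(k-1)/2}` contains no
linear forest with `k` edges, and its number of `s`-cliques (`s ≥ 1`) equals
`C((k+1)/2, s) + (n-(k+1)/2)·C((k-1)/2, s-1)`. -/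
theorem stmt7 (n k s : ℕ) (hk : Odd k) (hn : (k + 1) / 2 ≤ n) (hs : 1 ≤ s) :
    ¬ containsLinearForest (joinGraph n ((k - 1) / 2)) k ∧
    cliqueCount (joinGraph n ((k - 1) / 2)) s =
      Nat.choose ((k + 1) / 2) s + (n - (k + 1) / 2) * Nat.choose ((k - 1) / 2) (s - 1) := by
  obtain ⟨m, rfl⟩ := hk
  obtain ⟨t, rfl⟩ : ∃ t, s = t + 1 := ⟨s - 1, by omega⟩
  have hm : (2 * m + 1 - 1) / 2 = m := by omega
  have hm' : (2 * m + 1 + 1) / 2 = m + 1 := by omega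
  rw [hm, hm'] at *
  refine ⟨not_containsLinearForest_joinGraph (Nat.lt_succ_self _), ?_⟩
  obtain ⟨r, rfl⟩ : ∃ r, n = m + 1 + r := ⟨n - (m + 1), by omega⟩
  rw [cliqueCount_joinGraph_succ (by omega), Nat.choose_succ_succ', Nat.add_sub_cancel,
    show m + 1 + r - m = r + 1 by omega, Nat.add_sub_cancel_left]
  ring
end

section
/- For even k and n ≥ k/2 + 1, the join of K_{k/2 − 1} with the disjoint union of a single edge K_2 and n − k/2 − 1 isolated vertices contains no linear forest with k edges, and its number of s-cliques equals C(k/2 + 1, s) + (n − k/2 − 1)·C(k/2 − 1, s−1). -/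
/-! Every edge of the join except the `K₂` edge meets the clique `K_{k/2-1}`, so a subgraph of
maximum degree two has at most `2 (k/2 - 1) + 1 = k - 1` edges. An `s`-clique either lies in the
clique formed by the first `k/2 + 1` vertices, or consists of one of the remaining
`n - k/2 - 1` vertices together with `s - 1` vertices of `K_{k/2-1}`. -/

open SimpleGraph Finset

/-- The join `K_a ∨ (K_2 ∪ E_{n-a-2})`, realized on `Fin n`: the clique on the first `a`
vertices joined to everything, plus the extra edge between vertices `a` and `a+1`. -/
def joinGraphK2 (n a : ℕ) : SimpleGraph (Fin n) where
  Adj x y := x ≠ y ∧ ((x : ℕ) < a ∨ (y : ℕ) < a ∨ ((x : ℕ) < a + 2 ∧ (y : ℕ) < a + 2))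
  symm := ⟨by rintro x y ⟨h1, h2⟩; exact ⟨h1.symm, by tauto⟩⟩
  loopless := ⟨by rintro x ⟨h1, -⟩; exact h1 rfl⟩

namespace Finset

variable {V : Type*} [DecidableEq V]

theorem injOn_insert_of_disjoint {R C : Finset V} (h : Disjoint R C) :
    Set.InjOn (fun p : V × Finset V => insert p.1 p.2) {p | p.1 ∈ R ∧ p.2 ⊆ C} := by
  rintro ⟨v, S⟩ ⟨hv, hS⟩ ⟨w, T⟩ ⟨hw, hT⟩ (hvwST : insert v S = insert w T)
  have hvS : v ∉ S := fun hvS => disjoint_left.1 h hv (hS hvS)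
  have hwT : w ∉ T := fun hwT => disjoint_left.1 h hw (hT hwT)
  obtain rfl : v = w := by
    rcases mem_insert.1 (hvwST ▸ mem_insert_self v S) with hvw | hvT
    · exact hvw
    · exact absurd (hT hvT) (disjoint_left.1 h hv)
  rw [← erase_insert hvS, hvwST, erase_insert hwT]

theorem card_powersetCard_union_image_insert {T C R : Finset V} (hCT : C ⊆ T)
    (hRT : Disjoint R T) (s t : ℕ) :
    #(T.powersetCard s ∪ (R ×ˢ C.powersetCard t).image fun p => insert p.1 p.2) =
      (#T).choose s + #R * (#C).choose t := by
  have hdisj : Disjoint (T.powersetCard s)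
      ((R ×ˢ C.powersetCard t).image fun p => insert p.1 p.2) := by
    simp only [disjoint_left, mem_powersetCard, mem_image, mem_product, not_exists, not_and,
      Prod.forall]
    rintro _ ⟨hST, -⟩ v S ⟨hv, -⟩ rfl
    exact disjoint_left.1 hRT hv (hST (mem_insert_self v S))
  have hinj : Set.InjOn (fun p : V × Finset V => insert p.1 p.2) ↑(R ×ˢ C.powersetCard t) :=
    (injOn_insert_of_disjoint (hRT.mono_right hCT)).mono fun p hp => by
      simp only [coe_product, Set.mem_prod, mem_coe, mem_powersetCard] at hp
      exact ⟨hp.1, hp.2.1⟩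
  rw [card_union_of_disjoint hdisj, card_image_of_injOn hinj, card_product, card_powersetCard,
    card_powersetCard]

end Finset

namespace SimpleGraph

variable {V : Type*} [Fintype V] [DecidableEq V]

theorem card_edgeFinset_le_sum_degree_add_card (H : SimpleGraph V) [DecidableRel H.Adj]
    (c : Finset V) (F : Finset (Sym2 V))
    (hc : ∀ ⦃v w⦄, H.Adj v w → s(v, w) ∉ F → v ∈ c ∨ w ∈ c) :
    #H.edgeFinset ≤ ∑ v ∈ c, H.degree v + #F := by
  have hsub : H.edgeFinset ⊆ c.biUnion (fun v => H.incidenceFinset v) ∪ F := by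
    intro e he
    induction e with
    | h v w =>
      rw [mem_edgeFinset, mem_edgeSet] at he
      by_cases heF : s(v, w) ∈ F
      · exact mem_union_right _ heF
      · refine mem_union_left _ (mem_biUnion.2 ?_)
        rcases hc he heF with hv | hw
        · exact ⟨v, hv, (mem_incidenceFinset _ _ _).2 ⟨he, Sym2.mem_mk_left v w⟩⟩
        · exact ⟨w, hw, (mem_incidenceFinset _ _ _).2 ⟨he, Sym2.mem_mk_right v w⟩⟩
  calc #H.edgeFinset ≤ #(c.biUnion (fun v => H.incidenceFinset v) ∪ F) := card_le_card hsub
    _ ≤ #(c.biUnion (fun v => H.incidenceFinset v)) + #F := card_union_le _ _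
    _ ≤ ∑ v ∈ c, #(H.incidenceFinset v) + #F := by gcongr; exact card_biUnion_le
    _ = ∑ v ∈ c, H.degree v + #F := by simp only [card_incidenceFinset_eq_degree]

end SimpleGraph

theorem cliqueCount_eq_card_cliqueFinset {V : Type*} [Fintype V] [DecidableEq V]
    (G : SimpleGraph V) [DecidableRel G.Adj] (s : ℕ) :
    cliqueCount G s = #(G.cliqueFinset s) := by
  rw [← Set.ncard_coe_finset, coe_cliqueFinset]
  rfl

section joinGraphK2

variable {n a s : ℕ}

instance : DecidableRel (joinGraphK2 n a).Adj := fun x y =>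
  inferInstanceAs (Decidable (x ≠ y ∧ _))

theorem joinGraphK2_adj_of_val_lt {v w : Fin n} (hw : (w : ℕ) < a) (hvw : v ≠ w) :
    (joinGraphK2 n a).Adj v w :=
  ⟨hvw, Or.inr (Or.inl hw)⟩

theorem isClique_joinGraphK2_setOf_val_lt :
    (joinGraphK2 n a).IsClique {v | (v : ℕ) < a + 2} :=
  fun _ hv _ hw hvw => ⟨hvw, Or.inr (Or.inr ⟨hv, hw⟩)⟩

theorem joinGraphK2_adj_eq (hn : a + 2 ≤ n) {v w : Fin n} (h : (joinGraphK2 n a).Adj v w) :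
    (v : ℕ) < a ∨ (w : ℕ) < a ∨ s(v, w) = s(⟨a, by omega⟩, ⟨a + 1, by omega⟩) := by
  obtain ⟨hvw, hv | hw | ⟨hv, hw⟩⟩ := h
  · exact Or.inl hv
  · exact Or.inr (Or.inl hw)
  · have hvw' : (v : ℕ) ≠ w := Fin.val_ne_of_ne hvw
    simp only [Sym2.eq_iff, Fin.ext_iff]
    omega

theorem card_edgeFinset_le_of_le_joinGraphK2 (hn : a + 2 ≤ n) (H : SimpleGraph (Fin n))
    [DecidableRel H.Adj] (hH : H ≤ joinGraphK2 n a) (hdeg : ∀ v, H.degree v ≤ 2) :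
    #H.edgeFinset ≤ 2 * a + 1 := by
  set e : Sym2 (Fin n) := s(⟨a, by omega⟩, ⟨a + 1, by omega⟩)
  calc #H.edgeFinset
      ≤ ∑ v ∈ {v : Fin n | v < a}, H.degree v + #{e} := by
        refine H.card_edgeFinset_le_sum_degree_add_card _ _ fun v w hvw hF => ?_
        simp only [mem_filter, mem_univ, true_and]
        rcases joinGraphK2_adj_eq hn (hH hvw) with hv | hw | he
        exacts [Or.inl hv, Or.inr hw, absurd (mem_singleton.2 he) hF]
    _ ≤ ∑ _v ∈ {v : Fin n | v < a}, 2 + 1 := by grw [card_singleton, hdeg]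
    _ = 2 * a + 1 := by simp [Fin.card_filter_val_lt, mul_comm, show a ≤ n by omega]

theorem not_containsLinearForest_joinGraphK2 {k : ℕ} (hn : a + 2 ≤ n) (hk : 2 * a + 1 < k) :
    ¬ containsLinearForest (joinGraphK2 n a) k := by
  classical
  rintro ⟨H, hH, -, hdeg, rfl⟩
  have hdeg' : ∀ v, H.degree v ≤ 2 := fun v => by
    simpa only [Set.ncard_eq_toFinset_card', Set.toFinset_card, card_neighborSet_eq_degree]
      using hdeg v
  have := card_edgeFinset_le_of_le_joinGraphK2 hn H hH hdeg'
  rw [← coe_edgeFinset, Set.ncard_coe_finset] at hk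
  omega

theorem val_lt_of_isClique_joinGraphK2 {S : Set (Fin n)} (hS : (joinGraphK2 n a).IsClique S)
    {v w : Fin n} (hv : v ∈ S) (hva : a + 2 ≤ (v : ℕ)) (hw : w ∈ S) (hwv : w ≠ v) :
    (w : ℕ) < a := by
  obtain ⟨-, h⟩ := hS hw hv hwv
  omega

theorem cliqueFinset_joinGraphK2 (hs : 1 ≤ s) :
    (joinGraphK2 n a).cliqueFinset s =
      ({v : Fin n | v < a + 2} : Finset (Fin n)).powersetCard s ∪
        (({v : Fin n | v < a + 2} : Finset (Fin n))ᶜ ×ˢ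
          ({v : Fin n | v < a} : Finset (Fin n)).powersetCard (s - 1)).image
            fun p => insert p.1 p.2 := by
  ext S
  simp only [mem_cliqueFinset_iff, isNClique_iff, mem_union, mem_powersetCard, mem_image,
    mem_product, mem_compl, mem_filter, mem_univ, true_and, Prod.exists]
  constructor
  · rintro ⟨hS, rfl⟩
    by_cases hST : ∀ v ∈ S, (v : ℕ) < a + 2
    · exact Or.inl ⟨fun v hv => by simpa using hST v hv, rfl⟩
    · push Not at hST
      obtain ⟨v, hv, hva⟩ := hST
      refine Or.inr ⟨v, S.erase v, ⟨by simpa using hva, fun w hw => ?_, ?_⟩,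
        insert_erase hv⟩
      · simpa using val_lt_of_isClique_joinGraphK2 hS hv hva (mem_of_mem_erase hw)
          (ne_of_mem_erase hw)
      · rw [card_erase_of_mem hv]
  · rintro (⟨hST, rfl⟩ | ⟨v, S', ⟨hv, hS'a, hS'⟩, rfl⟩)
    · exact ⟨isClique_joinGraphK2_setOf_val_lt.subset fun v hv => by simpa using hST hv, rfl⟩
    · have hS'a' : ∀ w ∈ S', (w : ℕ) < a := fun w hw => by simpa using hS'a hw
      have hvS' : v ∉ S' := fun h => by have := hS'a' v h; omega
      refine ⟨coe_insert v S' ▸ isClique_insert.2 ⟨?_, fun w hw hvw => ?_⟩, ?_⟩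
      · exact isClique_joinGraphK2_setOf_val_lt.subset fun w hw =>
          Nat.lt_add_right 2 (hS'a' w hw)
      · exact joinGraphK2_adj_of_val_lt (hS'a' w hw) hvw
      · rw [card_insert_of_notMem hvS', hS']
        omega

theorem cliqueCount_joinGraphK2 (hn : a + 2 ≤ n) (hs : 1 ≤ s) :
    cliqueCount (joinGraphK2 n a) s =
      (a + 2).choose s + (n - (a + 2)) * a.choose (s - 1) := by
  rw [cliqueCount_eq_card_cliqueFinset, cliqueFinset_joinGraphK2 hs,
    card_powersetCard_union_image_insert
      (fun v hv => by simp only [mem_filter, mem_univ, true_and] at hv ⊢; omega)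
      disjoint_compl_left,
    card_compl, Fin.card_filter_val_lt, Fin.card_filter_val_lt, Fintype.card_fin,
    min_eq_right hn, min_eq_right (by omega : a ≤ n)]

end joinGraphK2

theorem stmt8_general (n k s : ℕ) (hk2 : 2 ≤ k) (hn : k / 2 + 1 ≤ n) (hs : 1 ≤ s) :
    ¬ containsLinearForest (joinGraphK2 n (k / 2 - 1)) k ∧
    cliqueCount (joinGraphK2 n (k / 2 - 1)) s =
      Nat.choose (k / 2 + 1) s + (n - k / 2 - 1) * Nat.choose (k / 2 - 1) (s - 1) := by
  have hn' : k / 2 - 1 + 2 ≤ n := by omega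
  refine ⟨not_containsLinearForest_joinGraphK2 hn' (by omega), ?_⟩
  rw [cliqueCount_joinGraphK2 hn' hs, show k / 2 - 1 + 2 = k / 2 + 1 by omega, Nat.sub_sub]

/-- For even `k ≥ 2` and `n ≥ k/2 + 1`, the join `K_{k/2-1} ∨ (K_2 ∪ E_{n-k/2-1})` contains
no linear forest with `k` edges, and its number of `s`-cliques (`s ≥ 1`) equals
`C(k/2+1, s) + (n-k/2-1)·C(k/2-1, s-1)`. -/
theorem stmt8 (n k s : ℕ) (hk : Even k) (hk2 : 2 ≤ k) (hn : k / 2 + 1 ≤ n) (hs : 1 ≤ s) :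
    ¬ containsLinearForest (joinGraphK2 n (k / 2 - 1)) k ∧
    cliqueCount (joinGraphK2 n (k / 2 - 1)) s =
      Nat.choose (k / 2 + 1) s + (n - k / 2 - 1) * Nat.choose (k / 2 - 1) (s - 1) :=
  stmt8_general n k s hk2 hn hs
end
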